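/- arXiv:1107.5031 — 8 statements merged into one kernel-verified Lean document; each statement's English description precedes it below -/
import Mathlib

section
/- Let q be a prime power, J₀ and J₁ fields containing 𝔽_q, W ⊆ J₀ an 𝔽_q-subspace of finite dimension d, and ℒ₁,…,ℒ_t : J₀ → J₁ 𝔽_q-linear maps. If i₁,…,i_t are nonnegative integers with i₁ + ⋯ + i_t < (q−1)·d, then for every x ∈ J₀, the sum over w ∈ W of ∏_{h=1}^t ℒ_h(x+w)^{i_h} equals 0. -/
open Finset

section Aux

variable {Fq J1 : Type*} [Field Fq] [Fintype Fq] [Field J1] [Algebra Fq J1]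

lemma pellarin_sum_phi_pow (k : ℕ) (hk : k < Fintype.card Fq - 1) :
    ∑ c : Fq, (algebraMap Fq J1 c) ^ k = 0 := by
  have : ∑ c : Fq, (algebraMap Fq J1 c) ^ k = algebraMap Fq J1 (∑ c : Fq, c ^ k) := by
    rw [map_sum]; simp [map_pow]
  rw [this, FiniteField.sum_pow_lt_card_sub_one _ _ hk, map_zero]

lemma pellarin_aux (t : ℕ) :
    ∀ (d : ℕ) (u : Fin t → J1) (A : Fin t → Fin d → J1) (i : Fin t → ℕ),
    (∑ h, i h < (Fintype.card Fq - 1) * d) →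
    ∑ c : Fin d → Fq, ∏ h, (u h + ∑ j, c j • A h j) ^ i h = 0 := by
  intro d
  induction d with
  | zero => intro u A i hi; simp at hi
  | succ d ih =>
    intro u A i hi
    -- reindex the sum over `Fin (d+1) → Fq` as a double sum
    have hre : ∑ c : Fin (d + 1) → Fq, ∏ h, (u h + ∑ j, c j • A h j) ^ i h
        = ∑ c0 : Fq, ∑ ct : Fin d → Fq,
            ∏ h, ((u h + ∑ j, ct j • A h j.succ) + c0 • A h 0) ^ i h := by
      rw [← Fintype.sum_prod_type']
      refine (Fintype.sum_equiv (Fin.consEquiv fun _ : Fin (d + 1) => Fq)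
        _ _ fun p => ?_).symm
      refine Finset.prod_congr rfl fun h _ => ?_
      congr 1
      rw [Fin.sum_univ_succ]
      simp [Fin.consEquiv, add_comm, add_left_comm]
    rw [hre]
    set v : (Fin d → Fq) → Fin t → J1 := fun ct h => u h + ∑ j, ct j • A h j.succ with hv
    set a : Fin t → J1 := fun h => A h 0 with ha
    have expand : ∀ (c0 : Fq) (ct : Fin d → Fq),
        ∏ h, (v ct h + c0 • a h) ^ i h
          = ∑ J ∈ Fintype.piFinset (fun h => Finset.range (i h + 1)),
              (algebraMap Fq J1 c0) ^ (∑ h, (i h - J h)) *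
              ((∏ h, v ct h ^ J h) *
                ∏ h, (a h ^ (i h - J h) * ((i h).choose (J h) : J1))) := by
      intro c0 ct
      have h1 : ∏ h, (v ct h + c0 • a h) ^ i h
          = ∏ h, ∑ m ∈ Finset.range (i h + 1),
              v ct h ^ m * (c0 • a h) ^ (i h - m) * ((i h).choose m : J1) := by
        refine Finset.prod_congr rfl fun h _ => ?_
        exact add_pow _ _ _
      rw [h1, Finset.prod_univ_sum]
      refine Finset.sum_congr rfl fun J _ => ?_
      have h2 : ∀ h : Fin t,
          v ct h ^ J h * (c0 • a h) ^ (i h - J h) * ((i h).choose (J h) : J1)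
            = (algebraMap Fq J1 c0) ^ (i h - J h) *
              (v ct h ^ J h * (a h ^ (i h - J h) * ((i h).choose (J h) : J1))) := by
        intro h
        rw [Algebra.smul_def, mul_pow]
        ring
      rw [Finset.prod_congr rfl fun h _ => h2 h, Finset.prod_mul_distrib,
        Finset.prod_mul_distrib, Finset.prod_pow_eq_pow_sum]
    simp +zetaDelta only [expand]
    rw [show (∑ c0 : Fq, ∑ ct : Fin d → Fq,
          ∑ J ∈ Fintype.piFinset (fun h => Finset.range (i h + 1)),
            (algebraMap Fq J1 c0) ^ (∑ h, (i h - J h)) *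
            ((∏ h, v ct h ^ J h) *
              ∏ h, (a h ^ (i h - J h) * ((i h).choose (J h) : J1))))
        = ∑ J ∈ Fintype.piFinset (fun h => Finset.range (i h + 1)),
            (∑ c0 : Fq, (algebraMap Fq J1 c0) ^ (∑ h, (i h - J h))) *
            ((∑ ct : Fin d → Fq, ∏ h, v ct h ^ J h) *
              ∏ h, (a h ^ (i h - J h) * ((i h).choose (J h) : J1))) from ?_]
    · refine Finset.sum_eq_zero fun J hJ => ?_
      rcases lt_or_ge (∑ h, (i h - J h)) (Fintype.card Fq - 1) with hlt | hge
      · rw [pellarin_sum_phi_pow _ hlt, zero_mul]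
      · have hJle : ∀ h, J h ≤ i h := by
          intro h
          have := (Fintype.mem_piFinset.mp hJ) h
          exact Nat.lt_succ_iff.mp (Finset.mem_range.mp this)
        have hsum : ∑ h, J h + ∑ h, (i h - J h) = ∑ h, i h := by
          rw [← Finset.sum_add_distrib]
          exact Finset.sum_congr rfl fun h _ => by
            have := hJle h; omega
        have hJlt : ∑ h, J h < (Fintype.card Fq - 1) * d := by
          have := hi
          rw [Nat.mul_succ] at this
          omega
        rw [ih u (fun h j => A h j.succ) J hJlt, zero_mul, mul_zero]
    · rw [show (∑ c0 : Fq, ∑ ct : Fin d → Fq,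
            ∑ J ∈ Fintype.piFinset (fun h => Finset.range (i h + 1)),
              (algebraMap Fq J1 c0) ^ (∑ h, (i h - J h)) *
              ((∏ h, v ct h ^ J h) *
                ∏ h, (a h ^ (i h - J h) * ((i h).choose (J h) : J1))))
          = ∑ c0 : Fq, ∑ J ∈ Fintype.piFinset (fun h => Finset.range (i h + 1)),
              ∑ ct : Fin d → Fq,
              (algebraMap Fq J1 c0) ^ (∑ h, (i h - J h)) *
              ((∏ h, v ct h ^ J h) *
                ∏ h, (a h ^ (i h - J h) * ((i h).choose (J h) : J1)))
          from Finset.sum_congr rfl fun _ _ => Finset.sum_comm]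
      rw [Finset.sum_comm]
      refine Finset.sum_congr rfl fun J _ => ?_
      rw [Finset.sum_mul]
      refine Finset.sum_congr rfl fun c0 _ => ?_
      rw [Finset.sum_mul, Finset.mul_sum]

end Aux

/-- Goss, Lemma 8.8.1 (first part): vanishing of sums of products of
`𝔽_q`-linear forms over a finite-dimensional `𝔽_q`-subspace `W` of a field `J₀`,
when the total exponent is less than `(q-1)·dim W`. -/
theorem pellarin_stmt0
    (Fq : Type*) [Field Fq] [Fintype Fq]
    (J0 J1 : Type*) [Field J0] [Field J1] [Algebra Fq J0] [Algebra Fq J1]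
    (W : Subspace Fq J0) [Fintype W]
    (t : ℕ) (L : Fin t → (J0 →ₗ[Fq] J1)) (i : Fin t → ℕ)
    (hi : ∑ h, i h < (Fintype.card Fq - 1) * Module.finrank Fq W)
    (x : J0) :
    ∑ w : W, ∏ h, (L h (x + (w : J0))) ^ (i h) = 0 := by
  let b := Module.finBasis Fq W
  rw [← Fintype.sum_equiv b.equivFun.symm.toEquiv
    (fun c => ∏ h, (L h (x + ((b.equivFun.symm c : W) : J0))) ^ (i h))
    (fun w => ∏ h, (L h (x + (w : J0))) ^ (i h)) (fun c => rfl)]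
  have key : ∀ c : Fin (Module.finrank Fq W) → Fq,
      ∏ h, (L h (x + ((b.equivFun.symm c : W) : J0))) ^ (i h)
        = ∏ h, (L h x + ∑ j, c j • L h ((b j : W) : J0)) ^ (i h) := by
    intro c
    refine Finset.prod_congr rfl fun h _ => ?_
    congr 1
    rw [Module.Basis.equivFun_symm_apply, map_add]
    congr 1
    push_cast
    rw [map_sum]
    exact Finset.sum_congr rfl fun j _ => by rw [map_smul]
  simp only [key]
  exact pellarin_aux t (Module.finrank Fq W) (fun h => L h x)
    (fun h j => L h ((b j : W) : J0)) i hi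
end

section
/- Let q be a prime power, W a finite-dimensional 𝔽_q-subspace of a field J₀ over 𝔽_q, and ℒ₁,…,ℒ_t : J₀ → J₁ 𝔽_q-linear maps into a field J₁ equipped with an additive discrete valuation v such that v(ℒ_h(w)) > 0 for all h and all w ∈ W. For j > 0 let W_j := {w ∈ W : v(ℒ_h(w)) ≥ j for all h}, and set Q := Σ_j dim_{𝔽_q} W_j. Then for any nonnegative integers i₁,…,i_t, v(Σ_{w∈W} ∏_{h=1}^t ℒ_h(w)^{i_h}) ≥ (q−1)·Q. -/
open Finset


section helpers
variable {J1 : Type*} [Field J1]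
variable {v : J1 → WithTop ℤ}

lemma wt_one_le {y : WithTop ℤ} (h : 0 < y) : 1 ≤ y := by
  cases y with
  | top => exact le_top
  | coe m =>
    have : (0:ℤ) < m := by exact_mod_cast h
    exact_mod_cast this

lemma wt_natCast_mono {a b : ℕ} (h : a ≤ b) : ((a : ℕ) : WithTop ℤ) ≤ ((b : ℕ) : WithTop ℤ) :=
  Nat.mono_cast h

lemma v_sum_ge (hv0 : v 0 = ⊤) (hvadd : ∀ x y, min (v x) (v y) ≤ v (x + y))
    {α : Type*} (s : Finset α) (f : α → J1) (b : WithTop ℤ)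
    (h : ∀ x ∈ s, b ≤ v (f x)) : b ≤ v (∑ x ∈ s, f x) := by
  classical
  induction s using Finset.induction with
  | empty => simp [hv0]
  | insert _ _ hx ih =>
    rw [Finset.sum_insert hx]
    refine le_trans (le_min (h _ (mem_insert_self _ _)) (ih fun x hx => h x (mem_insert_of_mem hx))) (hvadd _ _)

lemma v_pow_ge (hvmul : ∀ x y, v (x * y) = v x + v y) (hv1 : v 1 = 0)
    (x : J1) (m b : ℕ) (hx : ((b:ℕ) : WithTop ℤ) ≤ v x) :
    ((m * b : ℕ) : WithTop ℤ) ≤ v (x ^ m) := by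
  induction m with
  | zero => simp [hv1]
  | succ m ih =>
    have hv : v (x ^ (m+1)) = v x + v (x ^ m) := by rw [pow_succ, mul_comm, hvmul]
    rw [hv]
    have : (((m+1) * b : ℕ) : WithTop ℤ) = ((b:ℕ) : WithTop ℤ) + ((m*b : ℕ) : WithTop ℤ) := by
      rw [← Nat.cast_add]; congr 1; ring
    rw [this]
    exact add_le_add hx ih

lemma v_prod_ge (hvmul : ∀ x y, v (x * y) = v x + v y) (hv1 : v 1 = 0)
    {α : Type*} (s : Finset α) (f : α → J1) (B : α → ℕ)
    (h : ∀ x ∈ s, ((B x : ℕ) : WithTop ℤ) ≤ v (f x)) :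
    ((∑ x ∈ s, B x : ℕ) : WithTop ℤ) ≤ v (∏ x ∈ s, f x) := by
  classical
  induction s using Finset.induction with
  | empty => simp [hv1]
  | insert _ _ hx ih =>
    rw [Finset.prod_insert hx, Finset.sum_insert hx, hvmul]
    rw [Nat.cast_add]
    exact add_le_add (h _ (mem_insert_self _ _)) (ih fun x hx => h x (mem_insert_of_mem hx))

end helpers


section helpers2
variable {Fq J1 : Type*} [Field Fq] [Fintype Fq] [Field J1] [Algebra Fq J1]
variable {v : J1 → WithTop ℤ}

lemma v_neg_pow (hvmul : ∀ x y, v (x * y) = v x + v y)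
    {x : J1} (hx : v x < 0) : ∀ m : ℕ, 1 ≤ m → v (x ^ m) < 0 := by
  intro m hm
  induction m with
  | zero => omega
  | succ m ih =>
    rcases Nat.eq_or_lt_of_le hm with hm1 | hm2
    · simpa [← hm1] using hx
    · have hml : 1 ≤ m := by omega
      have h2 := ih hml
      have : v (x ^ (m+1)) = v x + v (x ^ m) := by rw [pow_succ, mul_comm, hvmul]
      rw [this]
      calc v x + v (x ^ m) ≤ v x + 0 := add_le_add le_rfl (le_of_lt h2)
        _ = v x := add_zero _
        _ < 0 := hx

lemma v_alg_nonneg (hv0 : v 0 = ⊤) (hvmul : ∀ x y, v (x * y) = v x + v y)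
    (hv1 : v 1 = 0) (c : Fq) : (0 : WithTop ℤ) ≤ v (algebraMap Fq J1 c) := by
  rcases eq_or_ne c 0 with rfl | hc
  · simp [hv0]
  · by_contra hneg
    push_neg at hneg
    have hq1 : 1 ≤ Fintype.card Fq - 1 := by
      have := Fintype.one_lt_card (α := Fq); omega
    have h1 : (algebraMap Fq J1 c) ^ (Fintype.card Fq - 1) = 1 := by
      rw [← map_pow, FiniteField.pow_card_sub_one_eq_one c hc, map_one]
    have := v_neg_pow hvmul hneg (Fintype.card Fq - 1) hq1
    rw [h1, hv1] at this
    exact lt_irrefl _ this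

lemma v_natCast_nonneg (Fq : Type*) [Field Fq] [Fintype Fq] [Algebra Fq J1] (hv0 : v 0 = ⊤) (hvmul : ∀ x y, v (x * y) = v x + v y)
    (hv1 : v 1 = 0) (n : ℕ) : (0 : WithTop ℤ) ≤ v ((n : J1)) := by
  have : ((n : J1)) = algebraMap Fq J1 ((n : Fq)) := by rw [map_natCast]
  rw [this]
  exact v_alg_nonneg hv0 hvmul hv1 _

lemma monomial_sum_eq_zero {d : ℕ} (m : Fin d → ℕ)
    (hm : ∑ k, m k < (Fintype.card Fq - 1) * d) :
    ∑ c : Fin d → Fq, ∏ k, (c k) ^ (m k) = 0 := by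
  have hex : ∃ k, m k < Fintype.card Fq - 1 := by
    by_contra hno
    push_neg at hno
    have : (Fintype.card Fq - 1) * d ≤ ∑ k, m k := by
      calc (Fintype.card Fq - 1) * d = ∑ _k : Fin d, (Fintype.card Fq - 1) := by
            simp [mul_comm]
        _ ≤ ∑ k, m k := Finset.sum_le_sum fun k _ => hno k
    omega
  obtain ⟨k, hk⟩ := hex
  classical
  rw [← Fintype.piFinset_univ]
  rw [← Finset.prod_univ_sum (fun _ : Fin d => (univ : Finset Fq)) (fun i y => y ^ m i)]
  exact Finset.prod_eq_zero (Finset.mem_univ k)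
    (FiniteField.sum_pow_lt_card_sub_one _ _ hk)

lemma sum_eval_eq_zero {d : ℕ} (f : MvPolynomial (Fin d) J1)
    (hf : f.totalDegree < (Fintype.card Fq - 1) * d) :
    ∑ c : Fin d → Fq, MvPolynomial.eval (fun k => algebraMap Fq J1 (c k)) f = 0 := by
  classical
  simp only [MvPolynomial.eval_eq']
  rw [Finset.sum_comm]
  refine Finset.sum_eq_zero fun m hm => ?_
  have hdeg : ∑ k, m k < (Fintype.card Fq - 1) * d := by
    refine lt_of_le_of_lt ?_ hf
    have h1 : ∑ k, m k = m.sum fun _ e => e := by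
      rw [Finsupp.sum]
      refine (Finset.sum_subset (Finset.subset_univ _) ?_).symm
      intro x _ hx
      simpa using (Finsupp.notMem_support_iff.mp hx)
    rw [h1]
    exact MvPolynomial.le_totalDegree hm
  have key : ∑ c : Fin d → Fq, (MvPolynomial.coeff m f * ∏ k, (algebraMap Fq J1 (c k)) ^ (m k))
      = MvPolynomial.coeff m f * algebraMap Fq J1 (∑ c : Fin d → Fq, ∏ k, (c k) ^ (m k)) := by
    rw [map_sum, Finset.mul_sum]
    refine Finset.sum_congr rfl fun c _ => ?_
    rw [map_prod]
    simp [map_pow]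
  rw [key, monomial_sum_eq_zero m hdeg, map_zero, mul_zero]

end helpers2


lemma vanishing {Fq J1 : Type*} [Field Fq] [Fintype Fq] [Field J1] [Algebra Fq J1]
    {V : Type*} [AddCommGroup V] [Module Fq V] [Fintype V]
    (t : ℕ) (M : Fin t → V →ₗ[Fq] J1) (b : Fin t → ℕ)
    (hb : ∑ h, b h < (Fintype.card Fq - 1) * Module.finrank Fq V) :
    ∑ x : V, ∏ h, (M h x) ^ (b h) = 0 := by
  classical
  set d := Module.finrank Fq V with hd
  let B : Module.Basis (Fin d) Fq V := Module.finBasis Fq V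
  set P : MvPolynomial (Fin d) J1 :=
    ∏ h, (∑ k, MvPolynomial.C (M h (B k)) * MvPolynomial.X k) ^ (b h) with hP
  have hPdeg : P.totalDegree < (Fintype.card Fq - 1) * d := by
    refine lt_of_le_of_lt ?_ hb
    calc P.totalDegree ≤ ∑ h, ((∑ k, MvPolynomial.C (M h (B k)) * MvPolynomial.X k) ^ (b h)).totalDegree :=
          MvPolynomial.totalDegree_finset_prod _ _
      _ ≤ ∑ h, b h := by
          refine Finset.sum_le_sum fun h _ => ?_
          refine le_trans (MvPolynomial.totalDegree_pow _ _) ?_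
          have h1 : (∑ k, MvPolynomial.C (M h (B k)) * MvPolynomial.X k).totalDegree ≤ 1 := by
            refine MvPolynomial.totalDegree_finsetSum_le fun k _ => ?_
            refine le_trans (MvPolynomial.totalDegree_mul _ _) ?_
            simp [MvPolynomial.totalDegree_C, MvPolynomial.totalDegree_X]
          calc b h * (∑ k, MvPolynomial.C (M h (B k)) * MvPolynomial.X k).totalDegree
              ≤ b h * 1 := Nat.mul_le_mul_left _ h1
            _ = b h := mul_one _
  have key : ∀ x : V, ∏ h, (M h x) ^ (b h)
      = MvPolynomial.eval (fun k => algebraMap Fq J1 (B.repr x k)) P := by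
    intro x
    rw [hP, map_prod]
    refine Finset.prod_congr rfl fun h _ => ?_
    rw [map_pow]
    congr 1
    rw [map_sum]
    have hx : M h x = ∑ k, algebraMap Fq J1 (B.repr x k) * M h (B k) := by
      conv_lhs => rw [← B.sum_repr x]
      rw [map_sum]
      refine Finset.sum_congr rfl fun k _ => ?_
      rw [map_smul, Algebra.smul_def]
    rw [hx]
    refine Finset.sum_congr rfl fun k _ => ?_
    simp [mul_comm]
  calc ∑ x : V, ∏ h, (M h x) ^ (b h)
      = ∑ x : V, MvPolynomial.eval (fun k => algebraMap Fq J1 (B.repr x k)) P := by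
        exact Finset.sum_congr rfl fun x _ => key x
    _ = ∑ c : Fin d → Fq, MvPolynomial.eval (fun k => algebraMap Fq J1 (c k)) P := by
        refine Fintype.sum_equiv B.equivFun.toEquiv _ _ fun x => ?_
        congr 1
    _ = 0 := sum_eval_eq_zero P hPdeg


universe u

section main
variable {Fq J1 : Type*} [Field Fq] [Fintype Fq] [Field J1] [Algebra Fq J1]
variable {v : J1 → WithTop ℤ}

lemma key (v : J1 → WithTop ℤ) (hv0 : v 0 = ⊤)
    (hvmul : ∀ x y, v (x * y) = v x + v y)
    (hvadd : ∀ x y, min (v x) (v y) ≤ v (x + y))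
    (hv1 : v 1 = 0) (t : ℕ) :
    ∀ (n : ℕ) (V : Type u) (iG : AddCommGroup V), ∀ (iM : @Module Fq V _ iG.toAddCommMonoid) (iF : Fintype V)
      (M : Fin t → V →ₗ[Fq] J1), (∀ (h : Fin t) (w : V), 0 < v (M h w)) →
    ∀ (Wj : ℕ → Submodule Fq V),
      (∀ (j : ℕ) (x : V), x ∈ Wj j ↔ ∀ h : Fin t, (j : WithTop ℤ) ≤ v (M h x)) →
    ∀ (N : ℕ), (∀ j, N < j → Wj j = ⊥) →
    ∀ (i : Fin t → ℕ), Module.finrank Fq V = n →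
    (((Fintype.card Fq - 1) * ∑ j ∈ Finset.Icc 1 N, Module.finrank Fq (Wj j) : ℕ) : WithTop ℤ)
      ≤ v (∑ w : V, ∏ h, (M h w) ^ (i h)) := by
  intro n
  induction n using Nat.strong_induction_on with
  | _ n ih =>
  intro V iG iM iF M hpos Wj hWj N hN i hrank
  classical
  by_cases hVtriv : Subsingleton V
  · -- base case: V trivial
    have hQ0 : ∀ j, Module.finrank Fq (Wj j) = 0 := by
      intro j
      haveI : Subsingleton (Wj j) := by
        constructor; intro a b; ext; exact Subsingleton.elim _ _
      exact Module.finrank_zero_of_subsingleton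
    have hLHS : (((Fintype.card Fq - 1) * ∑ j ∈ Finset.Icc 1 N, Module.finrank Fq (Wj j) : ℕ) : WithTop ℤ) = 0 := by
      have : ∑ j ∈ Finset.Icc 1 N, Module.finrank Fq (Wj j) = 0 :=
        Finset.sum_eq_zero fun j _ => hQ0 j
      rw [this, Nat.mul_zero, Nat.cast_zero]
    rw [hLHS]
    haveI : Unique V := uniqueOfSubsingleton 0
    have hsum : ∑ w : V, ∏ h, (M h w) ^ (i h) = ∏ h, (M h 0) ^ (i h) := by
      rw [Fintype.sum_unique]
      have hd0 : (default : V) = 0 := Subsingleton.elim _ _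
      rw [hd0]
    rw [hsum]
    by_cases hi : ∀ h, i h = 0
    · have : ∏ h, (M h (0:V)) ^ (i h) = 1 := by
        refine Finset.prod_eq_one fun h _ => ?_
        rw [hi h, pow_zero]
      rw [this, hv1]
    · push_neg at hi
      obtain ⟨h0, hh0⟩ := hi
      have : ∏ h, (M h (0:V)) ^ (i h) = 0 := by
        refine Finset.prod_eq_zero (Finset.mem_univ h0) ?_
        rw [map_zero, zero_pow hh0]
      rw [this, hv0]
      exact le_top
  · haveI : Nontrivial V := not_subsingleton_iff_nontrivial.mp hVtriv
    have hmono : ∀ {j j' : ℕ}, j ≤ j' → Wj j' ≤ Wj j := by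
      intro j j' hjj' x hx
      rw [hWj] at hx ⊢
      intro h
      exact le_trans (Nat.mono_cast hjj') (hx h)
    have hW1 : Wj 1 = ⊤ := by
      ext x
      simp only [hWj, Submodule.mem_top, iff_true]
      intro h
      have h2 := hpos h x
      rw [Nat.cast_one]
      cases hy : v (M h x) with
      | top => exact le_top
      | coe m =>
        rw [hy] at h2
        have : (0:ℤ) < m := by exact_mod_cast h2
        exact_mod_cast this
    have hN1 : 1 ≤ N := by
      by_contra hN0
      push_neg at hN0
      have hb := hN 1 (by omega)
      rw [hb] at hW1
      exact absurd hW1 bot_ne_top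
    set j0 := Nat.findGreatest (fun j => Wj j = ⊤) N with hj0def
    have hj0_top : Wj j0 = ⊤ := by
      rw [hj0def]; exact Nat.findGreatest_spec (P := fun j => Wj j = ⊤) hN1 hW1
    have hj0_pos : 1 ≤ j0 := by
      rw [hj0def]; exact Nat.le_findGreatest (P := fun j => Wj j = ⊤) hN1 hW1
    have hj0N : j0 ≤ N := by
      rw [hj0def]; exact Nat.findGreatest_le N
    have hU_ne : Wj (j0+1) ≠ ⊤ := by
      by_cases hc : j0 + 1 ≤ N
      · rw [hj0def]
        exact Nat.findGreatest_is_greatest (P := fun j => Wj j = ⊤) (by omega) hc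
      · rw [hN (j0+1) (by omega)]
        exact bot_ne_top
    set U := Wj (j0 + 1) with hUdef
    set d := Module.finrank Fq U with hdd
    have hUlt : U < ⊤ := lt_top_iff_ne_top.mpr hU_ne
    have hdn : d < n := hrank ▸ Submodule.finrank_lt hUlt.ne
    obtain ⟨C, hC⟩ := Submodule.exists_isCompl U
    have hdsum : d + Module.finrank Fq C = n := by
      rw [← hrank, hdd]
      exact Submodule.finrank_add_eq_of_isCompl hC
    set r := Module.finrank Fq C with hrr
    have hallj0 : ∀ (x : V) (h : Fin t), ((j0:ℕ) : WithTop ℤ) ≤ v (M h x) := by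
      intro x h
      have hx : x ∈ Wj j0 := by rw [hj0_top]; trivial
      exact (hWj j0 x).mp hx h
    -- filtration on U
    set M' : Fin t → (U →ₗ[Fq] J1) := fun h => (M h).comp U.subtype with hM'
    set Wj' : ℕ → Submodule Fq U := fun j => (Wj j).comap U.subtype with hWj'def
    have hWj' : ∀ (j : ℕ) (x : U), x ∈ Wj' j ↔ ∀ h : Fin t, ((j:ℕ) : WithTop ℤ) ≤ v (M' h x) := by
      intro j x
      simp only [hWj'def, Submodule.mem_comap, hWj, hM', LinearMap.comp_apply,
        Submodule.coe_subtype]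
    have hN' : ∀ j, N < j → Wj' j = ⊥ := by
      intro j hj
      simp only [hWj'def, hN j hj, Submodule.comap_bot, Submodule.ker_subtype]
    -- arithmetic on Q
    set QV := ∑ j ∈ Finset.Icc 1 N, Module.finrank Fq (Wj j) with hQV
    set QU := ∑ j ∈ Finset.Icc 1 N, Module.finrank Fq (Wj' j) with hQU
    have hsplitV : QV = j0 * n + ∑ j ∈ Finset.Ioc j0 N, Module.finrank Fq (Wj j) := by
      rw [hQV, show Finset.Icc 1 N = Finset.Ioc 0 N from by rw [← Finset.Icc_add_one_left_eq_Ioc]; rfl,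
        ← Finset.sum_Ioc_consecutive _ (Nat.zero_le j0) hj0N]
      congr 1
      have : ∀ j ∈ Finset.Ioc 0 j0, Module.finrank Fq (Wj j) = n := by
        intro j hj
        rw [Finset.mem_Ioc] at hj
        have : Wj j = ⊤ := top_unique (hj0_top ▸ hmono hj.2)
        rw [this, ← hrank]
        exact finrank_top Fq V
      rw [Finset.sum_congr rfl this, Finset.sum_const, Nat.card_Ioc, smul_eq_mul,
        Nat.sub_zero]
    have hsplitU : QU = j0 * d + ∑ j ∈ Finset.Ioc j0 N, Module.finrank Fq (Wj j) := by
      rw [hQU, show Finset.Icc 1 N = Finset.Ioc 0 N from by rw [← Finset.Icc_add_one_left_eq_Ioc]; rfl,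
        ← Finset.sum_Ioc_consecutive _ (Nat.zero_le j0) hj0N]
      congr 1
      · have : ∀ j ∈ Finset.Ioc 0 j0, Module.finrank Fq (Wj' j) = d := by
          intro j hj
          rw [Finset.mem_Ioc] at hj
          have h1 : Wj j = ⊤ := top_unique (hj0_top ▸ hmono hj.2)
          have h2 : Wj' j = ⊤ := by rw [hWj'def]; simp [h1]
          rw [h2, hdd]
          exact finrank_top Fq U
        rw [Finset.sum_congr rfl this, Finset.sum_const, Nat.card_Ioc, smul_eq_mul,
          Nat.sub_zero]
      · refine Finset.sum_congr rfl fun j hj => ?_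
        rw [Finset.mem_Ioc] at hj
        have hle : Wj j ≤ U := hUdef ▸ hmono hj.1
        exact (Submodule.comapSubtypeEquivOfLe hle).finrank_eq
    have hQQ : (Fintype.card Fq - 1) * QV
        = (Fintype.card Fq - 1) * QU + ((Fintype.card Fq - 1) * (n - d)) * j0 := by
      have h1 : j0 * n = j0 * d + j0 * (n - d) := by
        rw [← Nat.mul_add, Nat.add_sub_cancel' (le_of_lt hdn)]
      have h2 : QV = QU + j0 * (n - d) := by rw [hsplitV, hsplitU, h1]; ring
      rw [h2, Nat.mul_add]
      ring
    -- sum decomposition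
    haveI : Fintype U := Fintype.ofFinite _
    haveI : Fintype C := Fintype.ofFinite _
    set f : V → J1 := fun w => ∏ h, (M h w) ^ (i h) with hf
    have hsum1 : ∑ w : V, f w = ∑ u : U, ∑ c : C, f (↑u + ↑c) := by
      rw [← Equiv.sum_comp (Submodule.prodEquivOfIsCompl U C hC).toEquiv f,
        Fintype.sum_prod_type]
      rfl
    set A := Fintype.piFinset (fun h : Fin t => Finset.range (i h + 1)) with hA
    set T : (Fin t → ℕ) → J1 := fun a => ∑ u : U, ∏ h, (M h ↑u) ^ (a h) with hT
    set R : (Fin t → ℕ) → J1 := fun a => ∑ c : C, ∏ h, (M h ↑c) ^ (i h - a h) with hR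
    set Z : (Fin t → ℕ) → J1 := fun a => ∏ h, ((i h).choose (a h) : J1) with hZ
    have hsum2 : ∑ w : V, f w = ∑ a ∈ A, T a * R a * Z a := by
      rw [hsum1]
      have hexp : ∀ (u : U) (c : C), f (↑u + ↑c)
          = ∑ a ∈ A, (∏ h, (M h (↑u:V)) ^ (a h)) * (∏ h, (M h (↑c:V)) ^ (i h - a h))
              * (∏ h, ((i h).choose (a h) : J1)) := by
        intro u c
        simp only [hf]
        have h1 : ∀ h : Fin t, (M h ((↑u:V) + (↑c:V))) ^ (i h)
            = ∑ k ∈ Finset.range (i h + 1),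
                (M h (↑u:V)) ^ k * (M h (↑c:V)) ^ (i h - k) * ((i h).choose k : J1) := by
          intro h
          rw [map_add, add_pow]
        rw [Finset.prod_congr rfl fun h _ => h1 h, Finset.prod_univ_sum]
        refine Finset.sum_congr rfl fun a _ => ?_
        rw [Finset.prod_mul_distrib, Finset.prod_mul_distrib]
      calc ∑ u : U, ∑ c : C, f (↑u + ↑c)
          = ∑ u : U, ∑ c : C, ∑ a ∈ A, (∏ h, (M h (↑u:V)) ^ (a h))
              * (∏ h, (M h (↑c:V)) ^ (i h - a h)) * (∏ h, ((i h).choose (a h) : J1)) :=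
            Finset.sum_congr rfl fun u _ => Finset.sum_congr rfl fun c _ => hexp u c
        _ = ∑ a ∈ A, ∑ u : U, ∑ c : C, (∏ h, (M h (↑u:V)) ^ (a h))
              * (∏ h, (M h (↑c:V)) ^ (i h - a h)) * (∏ h, ((i h).choose (a h) : J1)) := by
            rw [show (∑ u : U, ∑ c : C, ∑ a ∈ A, (∏ h, (M h (↑u:V)) ^ (a h))
              * (∏ h, (M h (↑c:V)) ^ (i h - a h)) * (∏ h, ((i h).choose (a h) : J1)))
              = ∑ u : U, ∑ a ∈ A, ∑ c : C, (∏ h, (M h (↑u:V)) ^ (a h))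
              * (∏ h, (M h (↑c:V)) ^ (i h - a h)) * (∏ h, ((i h).choose (a h) : J1))
              from Finset.sum_congr rfl fun u _ => Finset.sum_comm]
            exact Finset.sum_comm
        _ = ∑ a ∈ A, T a * R a * Z a := by
            refine Finset.sum_congr rfl fun a _ => ?_
            simp only [hT, hR, hZ]
            rw [Finset.sum_mul_sum, Finset.sum_mul]
            refine Finset.sum_congr rfl fun u _ => ?_
            rw [Finset.sum_mul]
    rw [hsum2]
    refine v_sum_ge hv0 hvadd _ _ _ (fun a ha => ?_)
    have hai : ∀ h, a h ≤ i h := by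
      intro h
      have := Fintype.mem_piFinset.mp ha h
      rw [Finset.mem_range] at this
      omega
    rw [hvmul, hvmul]
    by_cases hTA : ∑ h, a h < (Fintype.card Fq - 1) * d
    · have hT0 : T a = 0 := by
        rw [hT]
        have hvan := vanishing t M' a (by rw [← hdd]; exact hTA)
        simpa only [hM', LinearMap.comp_apply, Submodule.coe_subtype] using hvan
      rw [hT0, hv0, top_add, top_add]
      exact le_top
    by_cases hRA : ∑ h, (i h - a h) < (Fintype.card Fq - 1) * r
    · have hR0 : R a = 0 := by
        rw [hR]
        have hvan := vanishing t (fun h => (M h).comp C.subtype) (fun h => i h - a h)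
          (by rw [← hrr]; exact hRA)
        simpa only [LinearMap.comp_apply, Submodule.coe_subtype] using hvan
      rw [hR0, hv0, add_top, top_add]
      exact le_top
    push_neg at hTA hRA
    -- the main estimate
    have hpos' : ∀ (h : Fin t) (w : U), 0 < v (M' h w) := fun h w => hpos h ↑w
    have hvT : (((Fintype.card Fq - 1) * QU : ℕ) : WithTop ℤ) ≤ v (T a) := by
      have := ih d hdn U inferInstance inferInstance inferInstance M' hpos' Wj' hWj' N hN' a hdd.symm
      rw [hQU]
      simpa only [hM', LinearMap.comp_apply, Submodule.coe_subtype] using this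
    have hvR : (((((Fintype.card Fq - 1) * (n - d)) * j0) : ℕ) : WithTop ℤ) ≤ v (R a) := by
      refine le_trans (wt_natCast_mono ?_)
        (v_sum_ge hv0 hvadd _ _ (((∑ h, (i h - a h)) * j0 : ℕ) : WithTop ℤ) fun c _ => ?_)
      · have hrnd : r = n - d := by omega
        rw [← hrnd]
        exact Nat.mul_le_mul_right _ hRA
      · have hcast : (((∑ h, (i h - a h)) * j0 : ℕ) : WithTop ℤ)
            = ((∑ h, (i h - a h) * j0 : ℕ) : WithTop ℤ) := by
          rw [Finset.sum_mul]
        rw [hcast]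
        exact v_prod_ge hvmul hv1 _ _ (fun h => (i h - a h) * j0)
          (fun h _ => v_pow_ge hvmul hv1 _ _ _ (hallj0 (↑c) h))
    have hvZ : (0 : WithTop ℤ) ≤ v (Z a) := by
      simp only [hZ]
      rw [← Nat.cast_prod]
      exact v_natCast_nonneg Fq hv0 hvmul hv1 _
    calc (((Fintype.card Fq - 1) * QV : ℕ) : WithTop ℤ)
        = (((Fintype.card Fq - 1) * QU : ℕ) : WithTop ℤ)
          + (((((Fintype.card Fq - 1) * (n - d)) * j0) : ℕ) : WithTop ℤ) + 0 := by
          rw [← Nat.cast_add, hQQ, add_zero]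
      _ ≤ v (T a) + v (R a) + v (Z a) := add_le_add (add_le_add hvT hvR) hvZ

end main



/-- Goss, Lemma 8.8.1 (second part): a lower bound for the valuation of
`∑_{w ∈ W} ∏ ℒ_h(w)^{i_h}` in terms of `Q = ∑_{j ≥ 1} dim_{𝔽_q} W_j`, where
`W_j = {w ∈ W : v(ℒ_h(w)) ≥ j for all h}`. The additive discrete valuation
`v : J₁ → ℤ ∪ {∞}` satisfies `v(xy) = v(x)+v(y)`, `v(x+y) ≥ min(v(x),v(y))`
and `v(0) = ∞`, and `v(ℒ_h(w)) > 0` for all `h` and `w ∈ W`.  Finiteness of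
`Q` is expressed by the subspaces `W_j` vanishing for `j > N`. -/
theorem pellarin_stmt1
    (Fq : Type*) [Field Fq] [Fintype Fq]
    (J0 J1 : Type*) [Field J0] [Field J1] [Algebra Fq J0] [Algebra Fq J1]
    (W : Subspace Fq J0) [Fintype W]
    (v : J1 → WithTop ℤ)
    (hv0 : v 0 = ⊤)
    (hvmul : ∀ x y, v (x * y) = v x + v y)
    (hvadd : ∀ x y, min (v x) (v y) ≤ v (x + y))
    (t : ℕ) (L : Fin t → (J0 →ₗ[Fq] J1))
    (hpos : ∀ (h : Fin t) (w : W), 0 < v (L h (w : J0)))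
    (Wj : ℕ → Submodule Fq J0)
    (hWj : ∀ (j : ℕ) (x : J0),
      x ∈ Wj j ↔ x ∈ W ∧ ∀ h : Fin t, (j : WithTop ℤ) ≤ v (L h x))
    (N : ℕ) (hN : ∀ j, N < j → Wj j = ⊥)
    (Q : ℕ) (hQ : Q = ∑ j ∈ Finset.Icc 1 N, Module.finrank Fq (Wj j))
    (i : Fin t → ℕ) :
    (((Fintype.card Fq - 1) * Q : ℕ) : WithTop ℤ) ≤
      v (∑ w : W, ∏ h, (L h (w : J0)) ^ (i h)) := by
  classical
  -- degenerate case : v 1 = ⊤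
  by_cases hv1 : v 1 = 0
  swap
  · have hv1top : v 1 = ⊤ := by
      have h11 := hvmul 1 1
      rw [mul_one] at h11
      cases hy : v 1 with
      | top => rfl
      | coe m =>
        rw [hy] at h11
        have : m = m + m := by exact_mod_cast h11
        have hm0 : m = 0 := by omega
        rw [hm0] at hy
        exact absurd hy hv1
    have hall : ∀ x : J1, v x = ⊤ := by
      intro x
      have := hvmul x 1
      rw [mul_one, hv1top, add_top] at this
      exact this
    rw [hall]
    exact le_top
  -- main case
  set M : Fin t → (W →ₗ[Fq] J1) := fun h => (L h).comp W.subtype with hM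
  set Wj' : ℕ → Submodule Fq W := fun j => (Wj j).comap W.subtype with hWj'def
  have hWj' : ∀ (j : ℕ) (x : W), x ∈ Wj' j ↔ ∀ h : Fin t, ((j:ℕ) : WithTop ℤ) ≤ v (M h x) := by
    intro j x
    simp only [hWj'def, Submodule.mem_comap, hM, LinearMap.comp_apply, Submodule.coe_subtype]
    rw [hWj]
    exact ⟨fun hx => hx.2, fun hx => ⟨x.2, hx⟩⟩
  have hN' : ∀ j, N < j → Wj' j = ⊥ := by
    intro j hj
    simp only [hWj'def, hN j hj, Submodule.comap_bot, Submodule.ker_subtype]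
  have hQ' : Q = ∑ j ∈ Finset.Icc 1 N, Module.finrank Fq (Wj' j) := by
    rw [hQ]
    refine Finset.sum_congr rfl fun j _ => ?_
    have hle : Wj j ≤ W := fun x hx => ((hWj j x).mp hx).1
    exact ((Submodule.comapSubtypeEquivOfLe hle).finrank_eq).symm
  have hkey := key v hv0 hvmul hvadd hv1 t (Module.finrank Fq W) W
    inferInstance inferInstance inferInstance M (fun h w => hpos h w) Wj' hWj' N hN' i rfl
  rw [hQ']
  simpa only [hM, LinearMap.comp_apply, Submodule.coe_subtype] using hkey
end

section
/- Let q be a prime power and A = 𝔽_q[θ]. For an integer e ≥ 1, let A₊(e) denote the set of monic polynomials in A of degree e. Let t be an element of any commutative 𝔽_q-algebra R, and let χ_t : A → R be evaluation at t. Then for all nonnegative integers β and j with (q−1)·e > β + j, the sum Σ_{a ∈ A₊(e)} χ_t(a)^β · a^j vanishes in the polynomial ring R[θ] (where a^j ∈ A ⊆ R[θ] via the natural inclusion, interpreting the sum in A ⊗ R appropriately); equivalently, Σ_{a ∈ A₊(e)} a(t)^β · a(θ)^j = 0 in 𝔽_q[θ, t] when e > (β+j)/(q−1). -/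
open MvPolynomial

lemma aux_sum_aeval {Fq : Type*} [Field Fq] [Fintype Fq] {e : ℕ}
    {R : Type*} [CommRing R] [Algebra Fq R]
    (f : MvPolynomial (Fin e) R)
    (hf : f.totalDegree < (Fintype.card Fq - 1) * e) :
    ∑ c : Fin e → Fq, MvPolynomial.aeval (fun n => algebraMap Fq R (c n)) f = 0 := by
  have expand : ∀ c : Fin e → Fq,
      MvPolynomial.aeval (fun n => algebraMap Fq R (c n)) f
        = ∑ m ∈ f.support, f.coeff m *
            algebraMap Fq R (∏ n : Fin e, (c n) ^ m n) := by
    intro c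
    rw [MvPolynomial.aeval_def, MvPolynomial.eval₂_eq]
    refine Finset.sum_congr rfl fun m _ => ?_
    rw [map_prod]
    congr 1
    rw [Finset.prod_subset (Finset.subset_univ m.support)
      (fun i _ hi => by simp [Finsupp.notMem_support_iff.mp hi])]
    exact Finset.prod_congr rfl fun i _ => (map_pow _ _ _).symm
  simp_rw [expand]
  rw [Finset.sum_comm]
  refine Finset.sum_eq_zero fun m hm => ?_
  rw [← Finset.mul_sum, ← map_sum]
  have hz : ∑ c : Fin e → Fq, ∏ n : Fin e, (c n) ^ m n = 0 := by
    have : ∀ c : Fin e → Fq, ∏ n : Fin e, (c n) ^ m n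
        = MvPolynomial.eval c (MvPolynomial.monomial m (1 : Fq)) := by
      intro c; simp [MvPolynomial.eval_monomial, Finsupp.prod_pow]
    simp_rw [this]
    apply MvPolynomial.sum_eval_eq_zero
    rw [MvPolynomial.totalDegree_monomial _ one_ne_zero]
    calc (m.sum fun _ k => k) ≤ f.totalDegree := MvPolynomial.le_totalDegree hm
      _ < (Fintype.card Fq - 1) * e := hf
      _ = (Fintype.card Fq - 1) * Fintype.card (Fin e) := by simp
  rw [hz, map_zero, mul_zero]

lemma aux_td {R : Type*} [CommRing R] [Nontrivial R] {e : ℕ} (a : R) (b : Fin e → R) :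
    (MvPolynomial.C a + ∑ n : Fin e, MvPolynomial.X n * MvPolynomial.C (b n)
      : MvPolynomial (Fin e) R).totalDegree ≤ 1 := by
  refine (totalDegree_add _ _).trans (max_le (by simp [totalDegree_C]) ?_)
  refine (totalDegree_finset_sum _ _).trans (Finset.sup_le fun n _ => ?_)
  refine (totalDegree_mul _ _).trans ?_
  simp [totalDegree_X, totalDegree_C]

/-- The monic polynomial `θ^e + ∑_{n<e} c_n θ^n` of degree `e` determined by the
coefficient tuple `c : Fin e → Fq`; as `c` ranges over all tuples this enumerates
the set `A₊(e)` of monic polynomials of degree `e` in `A = 𝔽_q[θ]`. -/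
noncomputable def monicOf (Fq : Type*) [Field Fq] (e : ℕ) (c : Fin e → Fq) :
    Polynomial Fq :=
  Polynomial.X ^ e + ∑ n : Fin e, Polynomial.C (c n) * Polynomial.X ^ (n : ℕ)

/-- Vanishing of the coefficients of special polynomials (proof of Theorem 5.3):
in `𝔽_q[θ, t]`, realized as `(𝔽_q[t])[θ]` with `t` the inner variable (so `a(t)`
is `C a`) and `θ` the outer variable `X` (so `a(θ)` is `a` with its variable
replaced by `X`), one has `∑_{a ∈ A₊(e)} a(t)^β a(θ)^j = 0` whenever
`(q-1)·e > β + j`. -/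
theorem pellarin_stmt4
    (Fq : Type*) [Field Fq] [Fintype Fq]
    (e β j : ℕ) (he : 1 ≤ e)
    (h : β + j < (Fintype.card Fq - 1) * e) :
    ∑ c : Fin e → Fq,
        (Polynomial.C (monicOf Fq e c)) ^ β *
          (Polynomial.eval₂ (Polynomial.C.comp Polynomial.C) Polynomial.X
            (monicOf Fq e c)) ^ j
      = (0 : Polynomial (Polynomial Fq)) := by
  set R := Polynomial (Polynomial Fq)
  set gt : MvPolynomial (Fin e) R :=
    MvPolynomial.C (Polynomial.C ((Polynomial.X : Polynomial Fq) ^ e)) +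
      ∑ n : Fin e, MvPolynomial.X n * MvPolynomial.C (Polynomial.C ((Polynomial.X : Polynomial Fq) ^ (n : ℕ)))
    with hgt
  set gθ : MvPolynomial (Fin e) R :=
    MvPolynomial.C ((Polynomial.X : R) ^ e) +
      ∑ n : Fin e, MvPolynomial.X n * MvPolynomial.C ((Polynomial.X : R) ^ (n : ℕ))
    with hgθ
  have halg : ∀ x : Fq, algebraMap Fq R x = Polynomial.C (Polynomial.C x) := by
    intro x
    rw [Polynomial.algebraMap_apply, Polynomial.algebraMap_apply]
    rfl
  have key : ∀ c : Fin e → Fq,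
      MvPolynomial.aeval (fun n => algebraMap Fq R (c n)) (gt ^ β * gθ ^ j)
        = (Polynomial.C (monicOf Fq e c)) ^ β *
          (Polynomial.eval₂ (Polynomial.C.comp Polynomial.C) Polynomial.X
            (monicOf Fq e c)) ^ j := by
    intro c
    have h1 : MvPolynomial.aeval (fun n => algebraMap Fq R (c n)) gt
        = Polynomial.C (monicOf Fq e c) := by
      simp only [hgt, map_add, map_sum, map_mul, aeval_C, aeval_X, halg, monicOf]
      simp [map_add, map_sum, map_mul, mul_comm]
    have h2 : MvPolynomial.aeval (fun n => algebraMap Fq R (c n)) gθ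
        = Polynomial.eval₂ (Polynomial.C.comp Polynomial.C) Polynomial.X (monicOf Fq e c) := by
      simp only [hgθ, map_add, map_sum, map_mul, aeval_C, aeval_X, halg, monicOf,
        Polynomial.eval₂_add, Polynomial.eval₂_finset_sum, Polynomial.eval₂_mul,
        Polynomial.eval₂_pow, Polynomial.eval₂_X, Polynomial.eval₂_C]
      simp only [Algebra.algebraMap_self, RingHom.id_apply, RingHom.comp_apply]
    rw [map_mul, map_pow, map_pow, h1, h2]
  rw [← aux_sum_aeval (Fq := Fq) (gt ^ β * gθ ^ j) ?_]
  · exact Finset.sum_congr rfl fun c _ => (key c).symm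
  · calc (gt ^ β * gθ ^ j).totalDegree
        ≤ (gt ^ β).totalDegree + (gθ ^ j).totalDegree := totalDegree_mul _ _
      _ ≤ β * gt.totalDegree + j * gθ.totalDegree :=
          Nat.add_le_add (totalDegree_pow _ _) (totalDegree_pow _ _)
      _ ≤ β * 1 + j * 1 :=
          Nat.add_le_add (Nat.mul_le_mul_left _ (aux_td _ _)) (Nat.mul_le_mul_left _ (aux_td _ _))
      _ = β + j := by ring
      _ < _ := h
end

section
/- Let q be a prime power and A = 𝔽_q[θ]. For nonnegative integers β and j, define the special polynomial z(χ_t^β, x, −j) := Σ_{e≥0} x^{−e} (Σ_{a ∈ A₊(e)} a(t)^β a(θ)^j). Then all terms with e > (β+j)/(q−1) vanish, so z(χ_t^β, x, −j) is a polynomial in x^{−1} with coefficients in 𝔽_q[θ, t]; i.e., it lies in A[t][x^{−1}]. -/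
open MvPolynomial in
/-- Over any commutative algebra `R` over a finite field `Fq`, the sum over all
`Fq`-points (embedded via `algebraMap`) of a multivariate polynomial of small
total degree vanishes. -/
lemma sum_eval_algebraMap_eq_zero (Fq : Type*) [Field Fq] [Fintype Fq]
    {σ : Type*} [Fintype σ] [DecidableEq σ] (R : Type*) [CommRing R] [Algebra Fq R]
    (f : MvPolynomial σ R)
    (h : f.totalDegree < (Fintype.card Fq - 1) * Fintype.card σ) :
    ∑ x : σ → Fq, MvPolynomial.eval (fun n => algebraMap Fq R (x n)) f = 0 := by
  classical
  have key : ∀ d ∈ f.support, ∑ x : σ → Fq, ∏ i, (x i) ^ (d i) = (0 : Fq) := by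
    intro d hd
    have hmono : (monomial d (1 : Fq)).totalDegree <
        (Fintype.card Fq - 1) * Fintype.card σ := by
      rw [totalDegree_monomial d (one_ne_zero)]
      exact lt_of_le_of_lt (le_totalDegree hd) h
    have hz := MvPolynomial.sum_eval_eq_zero (monomial d (1 : Fq)) hmono
    calc ∑ x : σ → Fq, ∏ i, (x i) ^ (d i)
        = ∑ x : σ → Fq, eval x (monomial d (1 : Fq)) := by
          refine Finset.sum_congr rfl fun x _ => ?_
          rw [eval_monomial, one_mul, Finsupp.prod]
          refine (Finset.prod_subset (Finset.subset_univ _) ?_).symm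
          intro i _ hi
          simp [Finsupp.notMem_support_iff.mp hi]
      _ = 0 := hz
  calc ∑ x : σ → Fq, MvPolynomial.eval (fun n => algebraMap Fq R (x n)) f
      = ∑ x : σ → Fq, ∑ d ∈ f.support,
          f.coeff d * ∏ i, (algebraMap Fq R (x i)) ^ (d i) := by
        simp only [eval_eq']
    _ = ∑ d ∈ f.support, ∑ x : σ → Fq,
          f.coeff d * ∏ i, (algebraMap Fq R (x i)) ^ (d i) := Finset.sum_comm
    _ = 0 := Finset.sum_eq_zero ?_
  intro d hd
  rw [← Finset.mul_sum]
  have heq : ∑ x : σ → Fq, ∏ i, (algebraMap Fq R (x i)) ^ (d i)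
      = algebraMap Fq R (∑ x : σ → Fq, ∏ i, (x i) ^ (d i)) := by
    rw [map_sum]
    refine Finset.sum_congr rfl fun x _ => ?_
    rw [map_prod]
    exact Finset.prod_congr rfl fun i _ => by rw [map_pow]
  rw [heq, key d hd, map_zero, mul_zero]

open Polynomial in
/-- Express `φ (monicOf Fq e c)` as an `eval₂` of a fixed multivariate polynomial. -/
lemma eval₂_monic_mv (Fq : Type*) [Field Fq] (e : ℕ)
    {T : Type*} [CommRing T] (φ : Polynomial Fq →+* T) (c : Fin e → Fq) :
    MvPolynomial.eval₂ φ (fun n => φ (Polynomial.C (c n)))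
      (MvPolynomial.C (Polynomial.X ^ e) +
        ∑ n : Fin e, MvPolynomial.C (Polynomial.X ^ (n : ℕ)) * MvPolynomial.X n)
      = φ (monicOf Fq e c) := by
  rw [monicOf, map_add, map_sum]
  rw [MvPolynomial.eval₂_add, MvPolynomial.eval₂_C]
  congr 1
  rw [MvPolynomial.eval₂_sum]
  refine Finset.sum_congr rfl fun n _ => ?_
  rw [MvPolynomial.eval₂_mul, MvPolynomial.eval₂_C, MvPolynomial.eval₂_X, map_mul]
  ring

/-- Theorem 5.3 of the paper: the special "polynomial"
`z(χ_t^β, x, -j) = ∑_{e ≥ 0} x^{-e} (∑_{a ∈ A₊(e)} a(t)^β a(θ)^j)`,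
a priori a formal power series in `x⁻¹` with coefficients in
`𝔽_q[θ,t] = (𝔽_q[t])[θ]`, has vanishing coefficients for `(q-1)·e > β + j`; hence
it is a genuine polynomial in `x⁻¹` with coefficients in `A[t]`.  Here `a(t)^β` is
`(C a)^β` (with `t` the inner variable) and `a(θ)^j` has the variable of `a`
replaced by the outer variable `X = θ`. -/
theorem pellarin_stmt5
    (Fq : Type*) [Field Fq] [Fintype Fq] (β j : ℕ)
    (S : ℕ → Polynomial (Polynomial Fq))
    (hS : ∀ e : ℕ, S e =
      ∑ c : Fin e → Fq,
        (Polynomial.C (monicOf Fq e c)) ^ β *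
          (Polynomial.eval₂ (Polynomial.C.comp Polynomial.C) Polynomial.X
            (monicOf Fq e c)) ^ j) :
    (∀ e : ℕ, β + j < (Fintype.card Fq - 1) * e → S e = 0) ∧
      ∃ p : Polynomial (Polynomial (Polynomial Fq)),
        ∀ e : ℕ, p.coeff e = S e := by
  classical
  have hmain : ∀ e : ℕ, β + j < (Fintype.card Fq - 1) * e → S e = 0 := by
    intro e he
    set φ1 : Polynomial Fq →+* Polynomial (Polynomial Fq) := Polynomial.C with hφ1
    set φ2 : Polynomial Fq →+* Polynomial (Polynomial Fq) :=
      Polynomial.eval₂RingHom (Polynomial.C.comp Polynomial.C) Polynomial.X with hφ2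
    set A : MvPolynomial (Fin e) (Polynomial Fq) :=
      MvPolynomial.C (Polynomial.X ^ e) +
        ∑ n : Fin e, MvPolynomial.C (Polynomial.X ^ (n : ℕ)) * MvPolynomial.X n with hA
    have hAdeg : A.totalDegree ≤ 1 := by
      rw [hA]
      refine le_trans (MvPolynomial.totalDegree_add _ _) (max_le ?_ ?_)
      · rw [MvPolynomial.totalDegree_C]; omega
      · refine le_trans (MvPolynomial.totalDegree_finset_sum _ _) ?_
        refine Finset.sup_le fun n _ => ?_
        refine le_trans (MvPolynomial.totalDegree_mul _ _) ?_
        rw [MvPolynomial.totalDegree_C, MvPolynomial.totalDegree_X]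
    set P : MvPolynomial (Fin e) (Polynomial (Polynomial Fq)) :=
      (MvPolynomial.map φ1 A) ^ β * (MvPolynomial.map φ2 A) ^ j with hP
    have hmap : ∀ (φ : Polynomial Fq →+* Polynomial (Polynomial Fq)),
        (MvPolynomial.map φ A).totalDegree ≤ 1 := by
      intro φ
      rw [MvPolynomial.totalDegree]
      exact Finset.sup_le fun d hd => le_trans
        (MvPolynomial.le_totalDegree (MvPolynomial.support_map_subset _ _ hd)) hAdeg
    have hPdeg : P.totalDegree < (Fintype.card Fq - 1) * Fintype.card (Fin e) := by
      calc P.totalDegree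
          ≤ ((MvPolynomial.map φ1 A) ^ β).totalDegree +
              ((MvPolynomial.map φ2 A) ^ j).totalDegree :=
            MvPolynomial.totalDegree_mul _ _
        _ ≤ β * (MvPolynomial.map φ1 A).totalDegree +
              j * (MvPolynomial.map φ2 A).totalDegree := by
            gcongr <;> exact MvPolynomial.totalDegree_pow _ _
        _ ≤ β * 1 + j * 1 := by gcongr <;> exact hmap _
        _ = β + j := by ring
        _ < (Fintype.card Fq - 1) * Fintype.card (Fin e) := by
            simpa using he
    have hsum := sum_eval_algebraMap_eq_zero Fq (Polynomial (Polynomial Fq)) P hPdeg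
    rw [hS e, ← hsum]
    refine Finset.sum_congr rfl fun c _ => ?_
    have hv : ∀ (φ : Polynomial Fq →+* Polynomial (Polynomial Fq)),
        (∀ y : Fq, φ (Polynomial.C y) = algebraMap Fq (Polynomial (Polynomial Fq)) y) →
        MvPolynomial.eval (fun n => algebraMap Fq (Polynomial (Polynomial Fq)) (c n))
          (MvPolynomial.map φ A) = φ (monicOf Fq e c) := by
      intro φ hφ
      rw [MvPolynomial.eval_map]
      rw [← eval₂_monic_mv Fq e φ c, ← hA]
      congr 1
      funext n
      exact (hφ (c n)).symm
    have h1 : MvPolynomial.eval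
        (fun n => algebraMap Fq (Polynomial (Polynomial Fq)) (c n))
        (MvPolynomial.map φ1 A) = Polynomial.C (monicOf Fq e c) := by
      refine hv φ1 fun y => ?_
      rw [hφ1]
      rw [Polynomial.algebraMap_apply, Polynomial.algebraMap_apply]
      simp
    have h2 : MvPolynomial.eval
        (fun n => algebraMap Fq (Polynomial (Polynomial Fq)) (c n))
        (MvPolynomial.map φ2 A) =
        Polynomial.eval₂ (Polynomial.C.comp Polynomial.C) Polynomial.X
          (monicOf Fq e c) := by
      refine hv φ2 fun y => ?_
      rw [hφ2]
      rw [Polynomial.algebraMap_apply, Polynomial.algebraMap_apply]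
      simp
    rw [hP, map_mul, map_pow, map_pow, h1, h2]
  refine ⟨hmain, ?_⟩
  refine ⟨∑ e ∈ Finset.range (β + j + 1), Polynomial.monomial e (S e), fun e => ?_⟩
  rw [Polynomial.finset_sum_coeff]
  simp only [Polynomial.coeff_monomial]
  by_cases he : e < β + j + 1
  · rw [Finset.sum_eq_single e]
    · simp
    · intro b _ hb; simp [hb]
    · intro hmem; exact absurd (Finset.mem_range.mpr he) hmem
  · push_neg at he
    have hq : 1 ≤ Fintype.card Fq - 1 := by
      have := Fintype.one_lt_card (α := Fq)
      omega
    have hSe : S e = 0 := by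
      apply hmain
      calc β + j < e := by omega
        _ = 1 * e := (one_mul e).symm
        _ ≤ (Fintype.card Fq - 1) * e := by gcongr
    rw [hSe]
    refine Finset.sum_eq_zero fun b hb => ?_
    have hne : b ≠ e := by
      have := Finset.mem_range.mp hb; omega
    simp [hne]
end

section
/- Let q be a prime power, A = 𝔽_q[θ], and let β ≥ 0 and λ > β be integers with λ ≡ −β (mod q−1). Then the polynomial Σ_{e≥0} Σ_{a ∈ A₊(e)} a(t)^β a(θ)^λ (a finite sum in 𝔽_q[θ, t]) is identically zero. In other words, Σ over all monic a ∈ A of degree at most (β+λ)/(q−1) of a(t)^β a(θ)^λ = 0 in 𝔽_q[θ, t]. -/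
open Polynomial Finset

section Aux

variable {Fq : Type*} [Field Fq] [Fintype Fq]

/-- Sum of `x^m` over a finite field vanishes unless `m` is a positive multiple of `q-1`. -/
lemma aux_sum_pow (m : ℕ) (h : m = 0 ∨ ¬ (Fintype.card Fq - 1) ∣ m) :
    ∑ x : Fq, x ^ m = 0 := by
  have hq : 1 < Fintype.card Fq := Fintype.one_lt_card
  rcases h with rfl | h
  · simp [FiniteField.cast_card_eq_zero]
  · have hm0 : m ≠ 0 := fun hm => h (hm ▸ dvd_zero _)
    have hr : 0 < Fintype.card Fq - 1 := Nat.sub_pos_of_lt hq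
    have hmod : m % (Fintype.card Fq - 1) ≠ 0 := fun hc => h (Nat.dvd_of_mod_eq_zero hc)
    have : ∑ x : Fq, x ^ m = ∑ x : Fq, x ^ (m % (Fintype.card Fq - 1)) := by
      refine Finset.sum_congr rfl fun x _ => ?_
      by_cases hx : x = 0
      · simp [hx, zero_pow, hm0, hmod]
      · conv_lhs => rw [← Nat.div_add_mod m (Fintype.card Fq - 1)]
        rw [pow_add, pow_mul, FiniteField.pow_card_sub_one_eq_one x hx, one_pow, one_mul]
    rw [this]
    exact FiniteField.sum_pow_lt_card_sub_one Fq _ (Nat.mod_lt _ hr)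

end Aux

section Main

set_option linter.unusedSectionVars false

variable {Fq : Type*} [Field Fq] [Fintype Fq]

/-- The polynomial with coefficient tuple `a` (degree `< N`). -/
noncomputable def polyOf (N : ℕ) (a : Fin N → Fq) : Polynomial Fq :=
  ∑ n : Fin N, Polynomial.C (a n) * Polynomial.X ^ (n : ℕ)

/-- The summand `a(t)^β a(θ)^λ`. -/
noncomputable def pf (β lam : ℕ) (a : Polynomial Fq) : Polynomial (Polynomial Fq) :=
  (Polynomial.C a) ^ β *
    (Polynomial.eval₂ (Polynomial.C.comp Polynomial.C) Polynomial.X a) ^ lam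

lemma key_sum (β lam N : ℕ) (hN : β + lam < N * (Fintype.card Fq - 1))
    (i : Fin β → Fin N) (j : Fin lam → Fin N) :
    ∑ a : Fin N → Fq, (∏ k, a (i k)) * (∏ k, a (j k)) = 0 := by
  classical
  set g : Fin β ⊕ Fin lam → Fin N := Sum.elim i j with hg
  set m : Fin N → ℕ := fun n => #{k : Fin β ⊕ Fin lam | g k = n} with hm
  have hmono : ∀ a : Fin N → Fq, (∏ k, a (i k)) * (∏ k, a (j k)) = ∏ n, (a n) ^ m n := by
    intro a
    have h1 : (∏ k : Fin β, a (i k)) * ∏ k : Fin lam, a (j k)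
        = ∏ k : Fin β ⊕ Fin lam, a (g k) := (Fintype.prod_sum_type fun k => a (g k)).symm
    rw [h1, ← Finset.prod_fiberwise' (Finset.univ : Finset (Fin β ⊕ Fin lam)) g a]
    refine Finset.prod_congr rfl fun n _ => ?_
    rw [Finset.prod_const]
  simp_rw [hmono]
  -- turn sum over functions into product of sums
  have hswap : ∑ a : Fin N → Fq, ∏ n, (a n) ^ m n = ∏ n : Fin N, ∑ x : Fq, x ^ m n := by
    rw [Finset.prod_univ_sum, ← Fintype.piFinset_univ]
  rw [hswap]
  -- find a bad index
  have hsum : ∑ n, m n = β + lam := by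
    have htot := Finset.card_eq_sum_card_fiberwise
      (f := g) (s := (Finset.univ : Finset (Fin β ⊕ Fin lam))) (t := Finset.univ)
      (fun x _ => Finset.mem_univ _)
    simp only [Finset.card_univ, Fintype.card_sum, Fintype.card_fin] at htot
    simpa [hm] using htot.symm
  have hbad : ∃ n, m n = 0 ∨ ¬ (Fintype.card Fq - 1) ∣ m n := by
    by_contra hcon
    push_neg at hcon
    have hge : ∀ n, Fintype.card Fq - 1 ≤ m n := fun n =>
      Nat.le_of_dvd (Nat.pos_of_ne_zero (hcon n).1) (hcon n).2
    have : N * (Fintype.card Fq - 1) ≤ ∑ n, m n := by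
      calc N * (Fintype.card Fq - 1) = ∑ _n : Fin N, (Fintype.card Fq - 1) := by
            simp [Finset.sum_const, mul_comm]
        _ ≤ ∑ n, m n := Finset.sum_le_sum fun n _ => hge n
    omega
  obtain ⟨n, hn⟩ := hbad
  exact Finset.prod_eq_zero (Finset.mem_univ n) (aux_sum_pow _ hn)

lemma sum_pf_polyOf (β lam N : ℕ) (hN : β + lam < N * (Fintype.card Fq - 1)) :
    ∑ a : Fin N → Fq, pf β lam (polyOf N a) = 0 := by
  classical
  set R := Polynomial (Polynomial Fq)
  set φ : Fq →+* R := (Polynomial.C.comp Polynomial.C) with hφ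
  have hC : ∀ a : Fin N → Fq,
      (Polynomial.C (polyOf N a) : R) = ∑ n : Fin N, φ (a n) * (Polynomial.C Polynomial.X) ^ (n:ℕ) := by
    intro a; simp [polyOf, map_sum, hφ]
  have hE : ∀ a : Fin N → Fq,
      Polynomial.eval₂ (Polynomial.C.comp Polynomial.C) Polynomial.X (polyOf N a)
        = ∑ n : Fin N, φ (a n) * (Polynomial.X : R) ^ (n:ℕ) := by
    intro a
    rw [polyOf, Polynomial.eval₂_finset_sum]
    refine Finset.sum_congr rfl fun n _ => ?_
    simp [hφ]
  have expand : ∀ (w : R) (mdeg : ℕ) (a : Fin N → Fq),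
      (∑ n : Fin N, φ (a n) * w ^ (n:ℕ)) ^ mdeg
        = ∑ i ∈ Fintype.piFinset (fun _ : Fin mdeg => (Finset.univ : Finset (Fin N))),
            (∏ k, φ (a (i k))) * ∏ k, w ^ ((i k : ℕ)) := by
    intro w mdeg a
    calc (∑ n : Fin N, φ (a n) * w ^ (n:ℕ)) ^ mdeg
        = ∏ _k : Fin mdeg, ∑ n ∈ Finset.univ, φ (a n) * w ^ (n:ℕ) := by
          rw [Finset.prod_const, Finset.card_univ, Fintype.card_fin]
      _ = ∑ i ∈ Fintype.piFinset (fun _ : Fin mdeg => (Finset.univ : Finset (Fin N))),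
            ∏ k, φ (a (i k)) * w ^ ((i k : ℕ)) := Finset.prod_univ_sum _ _
      _ = _ := Finset.sum_congr rfl fun i _ => Finset.prod_mul_distrib
  calc ∑ a : Fin N → Fq, pf β lam (polyOf N a)
      = ∑ a : Fin N → Fq,
          ∑ i ∈ Fintype.piFinset (fun _ : Fin β => (Finset.univ : Finset (Fin N))),
          ∑ j ∈ Fintype.piFinset (fun _ : Fin lam => (Finset.univ : Finset (Fin N))),
            ((∏ k, φ (a (i k))) * ∏ k, (Polynomial.C Polynomial.X : R) ^ ((i k : ℕ))) *
            ((∏ k, φ (a (j k))) * ∏ k, (Polynomial.X : R) ^ ((j k : ℕ))) := by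
        refine Finset.sum_congr rfl fun a _ => ?_
        rw [pf, hC, hE, expand, expand, Finset.sum_mul]
        exact Finset.sum_congr rfl fun i _ => Finset.mul_sum _ _ _
    _ = ∑ i ∈ Fintype.piFinset (fun _ : Fin β => (Finset.univ : Finset (Fin N))),
        ∑ j ∈ Fintype.piFinset (fun _ : Fin lam => (Finset.univ : Finset (Fin N))),
          φ (∑ a : Fin N → Fq, (∏ k, a (i k)) * (∏ k, a (j k))) *
            ((∏ k, (Polynomial.C Polynomial.X : R) ^ ((i k : ℕ))) *
              ∏ k, (Polynomial.X : R) ^ ((j k : ℕ))) := by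
        rw [Finset.sum_comm]
        refine Finset.sum_congr rfl fun i _ => ?_
        rw [Finset.sum_comm]
        refine Finset.sum_congr rfl fun j _ => ?_
        rw [map_sum, Finset.sum_mul]
        refine Finset.sum_congr rfl fun a _ => ?_
        rw [map_mul, map_prod, map_prod]
        ring
    _ = 0 := by
        refine Finset.sum_eq_zero fun i _ => Finset.sum_eq_zero fun j _ => ?_
        rw [key_sum β lam N hN i j, map_zero, zero_mul]

lemma polyOf_snoc (M : ℕ) (c : Fin M → Fq) (x : Fq) :
    polyOf (M+1) (Fin.snoc c x) = polyOf M c + Polynomial.C x * Polynomial.X ^ M := by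
  rw [polyOf, polyOf, Fin.sum_univ_castSucc]
  simp

lemma pf_C_mul (β lam : ℕ) (hcong : (Fintype.card Fq - 1) ∣ (lam + β))
    (x : Fq) (hx : x ≠ 0) (b : Polynomial Fq) :
    pf β lam (Polynomial.C x * b) = pf β lam b := by
  have hx1 : x ^ (lam + β) = 1 := by
    obtain ⟨k, hk⟩ := hcong
    rw [hk, pow_mul, FiniteField.pow_card_sub_one_eq_one x hx, one_pow]
  rw [pf, pf, map_mul, Polynomial.eval₂_mul, mul_pow, mul_pow]
  have h1 : (Polynomial.C (Polynomial.C x) : Polynomial (Polynomial Fq)) ^ β *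
      (Polynomial.eval₂ (Polynomial.C.comp Polynomial.C) Polynomial.X (Polynomial.C x)) ^ lam
        = 1 := by
    rw [Polynomial.eval₂_C, RingHom.comp_apply, ← pow_add, ← map_pow, ← map_pow,
      add_comm β lam, hx1]
    simp
  calc (Polynomial.C (Polynomial.C x)) ^ β * (Polynomial.C b) ^ β *
        ((Polynomial.eval₂ (Polynomial.C.comp Polynomial.C) Polynomial.X (Polynomial.C x)) ^ lam *
          (Polynomial.eval₂ (Polynomial.C.comp Polynomial.C) Polynomial.X b) ^ lam)
      = ((Polynomial.C (Polynomial.C x)) ^ β *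
          (Polynomial.eval₂ (Polynomial.C.comp Polynomial.C) Polynomial.X (Polynomial.C x)) ^ lam) *
        ((Polynomial.C b) ^ β *
          (Polynomial.eval₂ (Polynomial.C.comp Polynomial.C) Polynomial.X b) ^ lam) := by ring
    _ = _ := by rw [h1, one_mul]

lemma poly_decomp (M : ℕ) (c : Fin M → Fq) (x : Fq) (hx : x ≠ 0) :
    polyOf M c + Polynomial.C x * Polynomial.X ^ M
      = Polynomial.C x * monicOf Fq M (fun n => x⁻¹ * c n) := by
  rw [monicOf, mul_add, Finset.mul_sum, polyOf, add_comm]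
  congr 1
  refine Finset.sum_congr rfl fun n _ => ?_
  rw [← mul_assoc, ← Polynomial.C_mul, mul_inv_cancel_left₀ hx]

/-- Recurrence: sum over all coefficient tuples = minus the partial sums of monic sums. -/
lemma sum_polyOf_eq (β lam : ℕ) (hlam : 0 < lam)
    (hcong : (Fintype.card Fq - 1) ∣ (lam + β)) (M : ℕ) :
    ∑ a : Fin M → Fq, pf β lam (polyOf M a)
      = - ∑ e ∈ Finset.range M, ∑ c : Fin e → Fq, pf β lam (monicOf Fq e c) := by
  classical
  induction M with
  | zero =>
      simp only [Finset.range_zero, Finset.sum_empty, neg_zero]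
      have huniv : (Finset.univ : Finset (Fin 0 → Fq)) = {fun i => (0 : Fq)} := by
        ext a
        simp only [Finset.mem_univ, Finset.mem_singleton, true_iff]
        funext n
        exact absurd n.2 (by omega)
      rw [huniv, Finset.sum_singleton, polyOf]
      simp [pf, zero_pow hlam.ne']
  | succ M ih =>
      have hsplit : ∑ a : Fin (M+1) → Fq, pf β lam (polyOf (M+1) a)
          = ∑ p : Fq × (Fin M → Fq), pf β lam (polyOf (M+1) (Fin.snoc p.2 p.1)) := by
        exact (Equiv.sum_comp (Fin.snocEquiv (fun _ => Fq))
          (fun a => pf β lam (polyOf (M+1) a))).symm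
      rw [hsplit, Fintype.sum_prod_type]
      have hterm : ∀ x : Fq, ∀ c : Fin M → Fq,
          pf β lam (polyOf (M+1) (Fin.snoc c x))
            = pf β lam (polyOf M c + Polynomial.C x * Polynomial.X ^ M) := by
        intro x c; rw [polyOf_snoc]
      simp_rw [hterm]
      rw [Finset.sum_eq_sum_sdiff_singleton_add (Finset.mem_univ (0 : Fq))]
      have hzero : ∑ c : Fin M → Fq, pf β lam (polyOf M c + Polynomial.C (0:Fq) * Polynomial.X ^ M)
          = ∑ c : Fin M → Fq, pf β lam (polyOf M c) := by
        simp
      have hx : ∀ x ∈ Finset.univ \ {(0:Fq)},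
          ∑ c : Fin M → Fq, pf β lam (polyOf M c + Polynomial.C x * Polynomial.X ^ M)
            = ∑ c : Fin M → Fq, pf β lam (monicOf Fq M c) := by
        intro x hxmem
        have hx0 : x ≠ 0 := by simpa using (Finset.mem_sdiff.1 hxmem).2
        have h1 : ∀ c : Fin M → Fq,
            pf β lam (polyOf M c + Polynomial.C x * Polynomial.X ^ M)
              = pf β lam (monicOf Fq M (fun n => x⁻¹ * c n)) := by
          intro c
          rw [poly_decomp M c x hx0, pf_C_mul β lam hcong x hx0]
        simp_rw [h1]
        exact Equiv.sum_comp
          (Equiv.piCongrRight fun _ : Fin M => Equiv.mulLeft₀ x⁻¹ (inv_ne_zero hx0))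
          (fun c => pf β lam (monicOf Fq M c))
      rw [Finset.sum_congr rfl hx, Finset.sum_const, hzero, ih]
      have hcard : #(Finset.univ \ {(0:Fq)}) = Fintype.card Fq - 1 := by
        rw [Finset.card_sdiff_of_subset (by simp)]
        simp
      rw [hcard]
      have hneg : ∀ y : Polynomial (Polynomial Fq), (Fintype.card Fq - 1) • y = - y := by
        intro y
        have h1 : ((Fintype.card Fq : ℕ) : Polynomial (Polynomial Fq)) = 0 := by
          rw [← map_natCast (Polynomial.C.comp (Polynomial.C (R := Fq)))]
          rw [FiniteField.cast_card_eq_zero]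
          simp
        have hq : 1 ≤ Fintype.card Fq := Fintype.card_pos
        rw [nsmul_eq_mul, Nat.cast_sub hq, h1, Nat.cast_one]; ring
      rw [hneg, Finset.range_add_one, Finset.sum_insert (by simp)]
      ring

end Main

/-- Proposition 5.5 (trivial zeroes): for integers `λ > β ≥ 0` with
`λ ≡ -β (mod q-1)`, the full special polynomial
`∑_{e ≥ 0} ∑_{a ∈ A₊(e)} a(t)^β a(θ)^λ` (a finite sum: only degrees
`e ≤ (β+λ)/(q-1)` contribute) vanishes identically in `𝔽_q[θ,t]`.  As in the
other statements `𝔽_q[θ,t]` is realized as `(𝔽_q[t])[θ]`, with `a(t) = C a` and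
`a(θ)` the polynomial `a` with its variable replaced by the outer variable `X`. -/
theorem pellarin_stmt6
    (Fq : Type*) [Field Fq] [Fintype Fq]
    (β lam : ℕ) (hbl : β < lam)
    (hcong : (Fintype.card Fq - 1) ∣ (lam + β)) :
    ∑ e ∈ Finset.range ((β + lam) / (Fintype.card Fq - 1) + 1),
      ∑ c : Fin e → Fq,
        (Polynomial.C (monicOf Fq e c)) ^ β *
          (Polynomial.eval₂ (Polynomial.C.comp Polynomial.C) Polynomial.X
            (monicOf Fq e c)) ^ lam
      = (0 : Polynomial (Polynomial Fq)) := by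
  classical
  have hq : 1 < Fintype.card Fq := Fintype.one_lt_card
  set r := Fintype.card Fq - 1 with hr
  have hr0 : 0 < r := by omega
  set D := (β + lam) / r with hD
  have hDr : D * r = β + lam := Nat.div_mul_cancel (by rwa [add_comm lam β] at hcong)
  have hlt : β + lam < (D + 1) * r := by
    rw [add_mul, one_mul, hDr]; omega
  have h1 := sum_polyOf_eq (Fq := Fq) β lam (by omega) hcong (D + 1)
  have h2 := sum_pf_polyOf (Fq := Fq) β lam (D + 1) hlt
  rw [h2] at h1
  have h3 : ∑ e ∈ Finset.range (D + 1), ∑ c : Fin e → Fq, pf β lam (monicOf Fq e c) = 0 := by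
    rwa [eq_comm, neg_eq_zero] at h1
  simpa [pf] using h3
end

section
/- Let q be a prime power, β ≥ 0 an integer, t ∈ ℂ_∞, and y ∈ ℤ_p. For each j ≥ 0, set c_j(y) := Σ_{a ∈ A₊(j)} (a(t)/α^j)^β ⟨a⟩^{−y}, where α ∈ ℂ_∞ satisfies −v_∞(α) ≥ max{−v_∞(t)+1, 1} and ⟨a⟩ := θ^{−j}a for a monic of degree j. Then v_∞(c_j(y)) ≥ (q−1)·j(j+1)/2 for all j ≥ 0. -/
private lemma gauss_aux (j : ℕ) : (∑ i : Fin j, ((j:ℤ) - i)) * 2 = j * (j+1) := by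
  induction j with
  | zero => simp
  | succ k ih =>
    rw [Fin.sum_univ_castSucc]
    have h : ∑ i : Fin k, (((k:ℕ)+1:ℤ) - (i.castSucc : Fin (k+1))) =
        (∑ i : Fin k, ((k:ℤ) - i)) + k := by
      have : ∀ i : Fin k, (((k:ℕ)+1:ℤ) - (i.castSucc : Fin (k+1))) = ((k:ℤ) - i) + 1 := by
        intro i; simp [Fin.coe_castSucc]; ring
      simp only [this, Finset.sum_add_distrib, Finset.sum_const, Finset.card_univ,
        Fintype.card_fin, nsmul_eq_mul, mul_one]
    push_cast at h ⊢
    rw [h]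
    push_cast
    ring_nf
    ring_nf at ih
    linarith

private lemma prod_zpow_sum {ι : Type*} (a : ℝ) (ha : a ≠ 0) (s : Finset ι) (f : ι → ℤ) :
    ∏ i ∈ s, a ^ f i = a ^ (∑ i ∈ s, f i) := by
  classical
  induction s using Finset.cons_induction with
  | empty => simp
  | cons i s hi ih => rw [Finset.prod_cons, Finset.sum_cons, ih, ← zpow_add₀ ha]

section wbnd

variable {j : ℕ} {K : Type*} [NormedField K] [IsUltrametricDist K]

private lemma wbnd_mul (w : Fin j → ℝ) (hw : ∀ i, 0 ≤ w i)
    {P Q : MvPolynomial (Fin j) K}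
    (hP : ∀ m : Fin j →₀ ℕ, ‖P.coeff m‖ ≤ ∏ i, w i ^ m i)
    (hQ : ∀ m : Fin j →₀ ℕ, ‖Q.coeff m‖ ≤ ∏ i, w i ^ m i) :
    ∀ m : Fin j →₀ ℕ, ‖(P * Q).coeff m‖ ≤ ∏ i, w i ^ m i := by
  intro m
  classical
  rw [MvPolynomial.coeff_mul]
  apply IsUltrametricDist.norm_sum_le_of_forall_le_of_nonneg
    (Finset.prod_nonneg fun i _ => pow_nonneg (hw i) _)
  intro x hx
  rw [Finset.HasAntidiagonal.mem_antidiagonal] at hx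
  rw [norm_mul]
  calc ‖P.coeff x.1‖ * ‖Q.coeff x.2‖
      ≤ (∏ i, w i ^ x.1 i) * (∏ i, w i ^ x.2 i) :=
        mul_le_mul (hP _) (hQ _) (norm_nonneg _)
          (Finset.prod_nonneg fun i _ => pow_nonneg (hw i) _)
    _ = ∏ i, w i ^ m i := by
        rw [← Finset.prod_mul_distrib]
        apply Finset.prod_congr rfl
        intro i _
        rw [← pow_add, ← hx]
        rfl

private lemma wbnd_one (w : Fin j → ℝ) (hw : ∀ i, 0 ≤ w i) :
    ∀ m : Fin j →₀ ℕ, ‖(1 : MvPolynomial (Fin j) K).coeff m‖ ≤ ∏ i, w i ^ m i := by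
  intro m
  classical
  rw [MvPolynomial.coeff_one]
  split_ifs with h
  · subst h
    simp
  · simpa using Finset.prod_nonneg fun i _ => pow_nonneg (hw i) _

private lemma wbnd_pow (w : Fin j → ℝ) (hw : ∀ i, 0 ≤ w i)
    {P : MvPolynomial (Fin j) K}
    (hP : ∀ m : Fin j →₀ ℕ, ‖P.coeff m‖ ≤ ∏ i, w i ^ m i) (n : ℕ) :
    ∀ m : Fin j →₀ ℕ, ‖(P ^ n).coeff m‖ ≤ ∏ i, w i ^ m i := by
  induction n with
  | zero => simpa using wbnd_one w hw
  | succ k ih => rw [pow_succ]; exact wbnd_mul w hw ih hP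

private lemma wbnd_affine (w : Fin j → ℝ) (hw : ∀ i, 0 ≤ w i)
    (a : K) (b : Fin j → K) (ha : ‖a‖ ≤ 1) (hb : ∀ i, ‖b i‖ ≤ w i) :
    ∀ m : Fin j →₀ ℕ,
      ‖(MvPolynomial.C a + ∑ i, MvPolynomial.C (b i) * MvPolynomial.X i :
          MvPolynomial (Fin j) K).coeff m‖ ≤ ∏ i, w i ^ m i := by
  intro m
  classical
  rw [MvPolynomial.coeff_add, MvPolynomial.coeff_sum, MvPolynomial.coeff_C]
  simp only [MvPolynomial.coeff_C_mul, MvPolynomial.coeff_X']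
  by_cases h0 : m = 0
  · subst h0
    have : ∀ i : Fin j, (Finsupp.single i 1 = (0 : Fin j →₀ ℕ)) = False := by
      intro i
      simp [Finsupp.single_eq_zero]
    simp only [this, if_true, eq_self_iff_true, if_false, mul_zero, Finset.sum_const_zero,
      add_zero, if_pos rfl]
    simpa using ha
  · rw [if_neg (fun h => h0 h.symm), zero_add]
    by_cases hx : ∃ i0 : Fin j, Finsupp.single i0 1 = m
    · obtain ⟨i0, hi0⟩ := hx
      have hsum : (∑ i : Fin j, b i * (if Finsupp.single i 1 = m then 1 else 0)) = b i0 := by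
        rw [Finset.sum_eq_single i0]
        · rw [if_pos hi0, mul_one]
        · intro i _ hne
          rw [if_neg, mul_zero]
          intro h
          exact hne (Finsupp.single_left_injective one_ne_zero (h.trans hi0.symm))
        · intro h; exact absurd (Finset.mem_univ i0) h
      rw [hsum]
      subst hi0
      have hprod : (∏ i : Fin j, w i ^ (Finsupp.single i0 1) i) = w i0 := by
        rw [Finset.prod_eq_single i0]
        · simp
        · intro i _ hne
          have : (Finsupp.single i0 1) i = 0 := by
            rw [Finsupp.single_apply, if_neg (fun h => hne h.symm)]
          rw [this, pow_zero]
        · intro h; exact absurd (Finset.mem_univ i0) h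
      rw [hprod]
      exact hb i0
    · push_neg at hx
      have : (∑ i : Fin j, b i * (if Finsupp.single i 1 = m then 1 else 0)) = 0 := by
        apply Finset.sum_eq_zero
        intro i _
        rw [if_neg (hx i), mul_zero]
      rw [this]
      simpa using Finset.prod_nonneg fun i _ => pow_nonneg (hw i) _

end wbnd

private lemma key_bound {j : ℕ} {Fq : Type*} [Field Fq] [Fintype Fq]
    {K : Type*} [NormedField K] [IsUltrametricDist K] [Algebra Fq K]
    (hconst : ∀ c : Fq, c ≠ 0 → ‖algebraMap Fq K c‖ = 1)
    (w : Fin j → ℝ) (hw0 : ∀ i, 0 ≤ w i) (hw1 : ∀ i, w i ≤ 1)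
    (P : MvPolynomial (Fin j) K)
    (hP : ∀ m : Fin j →₀ ℕ, ‖P.coeff m‖ ≤ ∏ i, w i ^ m i) :
    ‖∑ c : Fin j → Fq, MvPolynomial.eval (fun i => algebraMap Fq K (c i)) P‖ ≤
      ∏ i, w i ^ (Fintype.card Fq - 1) := by
  classical
  have halg : ∀ x : Fq, ‖algebraMap Fq K x‖ ≤ 1 := by
    intro x
    by_cases hx : x = 0
    · simp [hx]
    · exact (hconst x hx).le
  have hswap : (∑ c : Fin j → Fq, MvPolynomial.eval (fun i => algebraMap Fq K (c i)) P) =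
      ∑ d ∈ P.support, P.coeff d *
        ∏ i : Fin j, algebraMap Fq K (∑ x : Fq, x ^ d i) := by
    simp only [MvPolynomial.eval_eq']
    rw [Finset.sum_comm]
    apply Finset.sum_congr rfl
    intro d _
    rw [← Finset.mul_sum]
    congr 1
    have : ∀ i : Fin j, algebraMap Fq K (∑ x : Fq, x ^ d i) =
        ∑ x : Fq, (algebraMap Fq K x) ^ d i := by
      intro i; rw [map_sum]; exact Finset.sum_congr rfl fun x _ => map_pow _ _ _
    simp only [this]
    rw [Finset.prod_univ_sum]
    rw [← Fintype.piFinset_univ]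
  rw [hswap]
  apply IsUltrametricDist.norm_sum_le_of_forall_le_of_nonneg
    (Finset.prod_nonneg fun i _ => pow_nonneg (hw0 i) _)
  intro d _
  by_cases hd : ∀ i : Fin j, Fintype.card Fq - 1 ≤ d i
  · rw [norm_mul]
    calc ‖P.coeff d‖ * ‖∏ i : Fin j, algebraMap Fq K (∑ x : Fq, x ^ d i)‖
        ≤ (∏ i, w i ^ d i) * 1 := by
          apply mul_le_mul (hP d) _ (norm_nonneg _)
            (Finset.prod_nonneg fun i _ => pow_nonneg (hw0 i) _)
          rw [norm_prod]
          apply Finset.prod_le_one (fun i _ => norm_nonneg _) (fun i _ => halg _)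
      _ = ∏ i, w i ^ d i := mul_one _
      _ ≤ ∏ i, w i ^ (Fintype.card Fq - 1) := by
          apply Finset.prod_le_prod (fun i _ => pow_nonneg (hw0 i) _)
          intro i _
          exact pow_le_pow_of_le_one (hw0 i) (hw1 i) (hd i)
  · push_neg at hd
    obtain ⟨i0, hi0⟩ := hd
    have : (∏ i : Fin j, algebraMap Fq K (∑ x : Fq, x ^ d i)) = 0 := by
      apply Finset.prod_eq_zero (Finset.mem_univ i0)
      rw [FiniteField.sum_pow_lt_card_sub_one _ _ hi0, map_zero]
    rw [this, mul_zero, norm_zero]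
    exact Finset.prod_nonneg fun i _ => pow_nonneg (hw0 i) _

/-- The quadratic estimate in the proof of Theorem 4.2: for
`c_j(y) = ∑_{a ∈ A₊(j)} (a(t)/α^j)^β ⟨a⟩^{-y}`, with `α` satisfying
`-v_∞(α) ≥ max{-v_∞(t)+1, 1}` (i.e. `‖α‖ ≥ q·max{‖t‖,1}`), one has
`v_∞(c_j(y)) ≥ (q-1)·j(j+1)/2`, written multiplicatively as
`‖c_j(y)‖ ≤ q^{-(q-1)j(j+1)/2}`.  `C` models `ℂ_∞` (nonarchimedean normed
field containing `𝔽_q` and `θ` with `‖θ‖ = q`), `⟨a⟩ = θ^{-j} a(θ)` for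
`a ∈ A₊(j)`, and `upow` models `ℤ_p`-powers of `1`-units via the binomial
series (it preserves `1`-units, agrees with ordinary integral powers, and is
continuous in the exponent). -/
theorem pellarin_stmt11
    (p : ℕ) [Fact p.Prime]
    (Fq : Type*) [Field Fq] [Fintype Fq] [CharP Fq p]
    (C : Type*) [NormedField C] [IsUltrametricDist C] [Algebra Fq C]
    (hconst : ∀ c : Fq, c ≠ 0 → ‖algebraMap Fq C c‖ = 1)
    (θ : C) (hθ : ‖θ‖ = (Fintype.card Fq : ℝ))
    (upow : C → ℤ_[p] → C)
    (hupow_unit : ∀ u : C, ‖u - 1‖ < 1 → ∀ y : ℤ_[p], ‖upow u y - 1‖ < 1)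
    (hupow_int : ∀ u : C, ‖u - 1‖ < 1 → ∀ n : ℤ, upow u ((n : ℤ_[p])) = u ^ n)
    (hupow_cont : ∀ u : C, ‖u - 1‖ < 1 → Continuous fun y : ℤ_[p] => upow u y)
    (t α : C) (hα : (Fintype.card Fq : ℝ) * max ‖t‖ 1 ≤ ‖α‖)
    (β : ℕ) (y : ℤ_[p]) (j : ℕ) :
    ‖∑ c : Fin j → Fq,
        (Polynomial.aeval t (monicOf Fq j c) / α ^ j) ^ β *
          upow (θ ^ (-(j : ℤ)) * Polynomial.aeval θ (monicOf Fq j c)) (-y)‖ ≤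
      (Fintype.card Fq : ℝ) ^
        (-(((Fintype.card Fq - 1) * (j * (j + 1) / 2) : ℕ) : ℤ)) := by
  classical
  set q : ℕ := Fintype.card Fq with hqdef
  have hq2 : 2 ≤ q := Fintype.one_lt_card
  have hqR : (1:ℝ) < (q:ℝ) := by exact_mod_cast hq2
  have hq0 : (0:ℝ) < (q:ℝ) := by linarith
  have hqne : (q:ℝ) ≠ 0 := ne_of_gt hq0
  set M : ℝ := max ‖t‖ 1 with hMdef
  have hM1 : (1:ℝ) ≤ M := le_max_right _ _
  have hM0 : (0:ℝ) < M := by linarith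
  have hαnorm : (q:ℝ) * M ≤ ‖α‖ := hα
  have hα0 : α ≠ 0 := by
    intro h
    rw [h, norm_zero] at hαnorm
    nlinarith
  have hθ0 : θ ≠ 0 := by
    intro h
    rw [h, norm_zero] at hθ
    linarith
  -- abbreviations
  set w : Fin j → ℝ := fun i => (q:ℝ) ^ ((i:ℤ) - j) with hwdef
  have hw0 : ∀ i, 0 ≤ w i := fun i => le_of_lt (zpow_pos hq0 _)
  have hw1 : ∀ i, w i ≤ 1 := by
    intro i
    have : (q:ℝ) ^ ((i:ℤ) - j) ≤ (q:ℝ) ^ (0:ℤ) := by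
      apply zpow_le_zpow_right₀ hqR.le
      have := i.isLt
      omega
    simpa using this
  set u : (Fin j → Fq) → C :=
    fun c => θ ^ (-(j : ℤ)) * Polynomial.aeval θ (monicOf Fq j c) with hudef
  have hmonic : ∀ (x : C) (c : Fin j → Fq),
      Polynomial.aeval x (monicOf Fq j c) =
        x ^ j + ∑ n : Fin j, algebraMap Fq C (c n) * x ^ (n:ℕ) := by
    intro x c
    simp [monicOf, map_sum]
  have hu_eq : ∀ c : Fin j → Fq,
      u c = 1 + ∑ n : Fin j, algebraMap Fq C (c n) * θ ^ ((n:ℤ) - j) := by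
    intro c
    rw [hudef]
    simp only
    rw [hmonic, mul_add, Finset.mul_sum]
    congr 1
    · rw [← zpow_natCast θ j, ← zpow_add₀ hθ0]
      simp
    · apply Finset.sum_congr rfl
      intro i _
      rw [mul_left_comm, ← zpow_natCast θ (i:ℕ), ← zpow_add₀ hθ0]
      congr 2
      ring
  have hu : ∀ c : Fin j → Fq, ‖u c - 1‖ < 1 := by
    intro c
    rw [hu_eq c, add_sub_cancel_left]
    have hbound : ‖∑ n : Fin j, algebraMap Fq C (c n) * θ ^ ((n:ℤ) - j)‖ ≤ (q:ℝ)⁻¹ := by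
      apply IsUltrametricDist.norm_sum_le_of_forall_le_of_nonneg (by positivity)
      intro i _
      rw [norm_mul, norm_zpow, hθ]
      have h1 : ‖algebraMap Fq C (c i)‖ ≤ 1 := by
        by_cases hx : c i = 0
        · simp [hx]
        · exact (hconst _ hx).le
      have h2 : (q:ℝ) ^ ((i:ℤ) - j) ≤ (q:ℝ)⁻¹ := by
        rw [← zpow_neg_one]
        apply zpow_le_zpow_right₀ hqR.le
        have := i.isLt
        omega
      calc ‖algebraMap Fq C (c i)‖ * (q:ℝ) ^ ((i:ℤ) - j)
          ≤ 1 * (q:ℝ) ^ ((i:ℤ) - j) :=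
            mul_le_mul_of_nonneg_right h1 (le_of_lt (zpow_pos hq0 _))
        _ = (q:ℝ) ^ ((i:ℤ) - j) := one_mul _
        _ ≤ (q:ℝ)⁻¹ := h2
    have : (q:ℝ)⁻¹ < 1 := by
      rw [inv_eq_one_div, div_lt_one hq0]
      exact hqR
    exact lt_of_le_of_lt hbound this
  -- the `1`-unit norm facts about `t`, `α`
  have htM : ‖t‖ ≤ M := le_max_left _ _
  have hPa : ‖t ^ j / α ^ j‖ ≤ 1 := by
    rw [norm_div, norm_pow, norm_pow]
    have htα : ‖t‖ ≤ ‖α‖ := by nlinarith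
    apply div_le_one_of_le₀ (pow_le_pow_left₀ (norm_nonneg t) htα j) (by positivity)
  have hPb : ∀ i : Fin j, ‖t ^ (i:ℕ) / α ^ j‖ ≤ w i := by
    intro i
    rw [norm_div, norm_pow, norm_pow]
    have hnum : ‖t‖ ^ (i:ℕ) ≤ M ^ j :=
      le_trans (pow_le_pow_left₀ (norm_nonneg t) htM _)
        (pow_le_pow_right₀ hM1 (le_of_lt i.isLt))
    have hden : (q:ℝ) ^ j * M ^ j ≤ ‖α‖ ^ j := by
      rw [← mul_pow]
      exact pow_le_pow_left₀ (by positivity) hαnorm j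
    have hstep : ‖t‖ ^ (i:ℕ) / ‖α‖ ^ j ≤ M ^ j / ((q:ℝ) ^ j * M ^ j) :=
      div_le_div₀ (by positivity) hnum (by positivity) hden
    have heq : M ^ j / ((q:ℝ) ^ j * M ^ j) = (q:ℝ) ^ (-(j:ℤ)) := by
      rw [mul_comm, ← div_div, div_self (by positivity : (M:ℝ) ^ j ≠ 0), one_div,
        ← zpow_natCast (q:ℝ) j, ← zpow_neg]
    have hle : (q:ℝ) ^ (-(j:ℤ)) ≤ w i := by
      apply zpow_le_zpow_right₀ hqR.le
      omega
    calc ‖t‖ ^ (i:ℕ) / ‖α‖ ^ j ≤ M ^ j / ((q:ℝ) ^ j * M ^ j) := hstep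
      _ = (q:ℝ) ^ (-(j:ℤ)) := heq
      _ ≤ w i := hle
  -- the polynomials
  set Pt : MvPolynomial (Fin j) C :=
    MvPolynomial.C (t ^ j / α ^ j) +
      ∑ i : Fin j, MvPolynomial.C (t ^ (i:ℕ) / α ^ j) * MvPolynomial.X i with hPtdef
  set Qθ : MvPolynomial (Fin j) C :=
    MvPolynomial.C (1:C) +
      ∑ i : Fin j, MvPolynomial.C (θ ^ ((i:ℤ) - j)) * MvPolynomial.X i with hQθdef
  have hwPt : ∀ m : Fin j →₀ ℕ, ‖Pt.coeff m‖ ≤ ∏ i, w i ^ m i :=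
    wbnd_affine w hw0 _ _ hPa hPb
  have hwQθ : ∀ m : Fin j →₀ ℕ, ‖Qθ.coeff m‖ ≤ ∏ i, w i ^ m i := by
    apply wbnd_affine w hw0 _ _ (by simp)
    intro i
    rw [norm_zpow, hθ]
  have hevalPt : ∀ c : Fin j → Fq,
      MvPolynomial.eval (fun i => algebraMap Fq C (c i)) Pt =
        Polynomial.aeval t (monicOf Fq j c) / α ^ j := by
    intro c
    rw [hmonic t c, add_div, Finset.sum_div, hPtdef]
    simp only [map_add, MvPolynomial.eval_C, map_sum, MvPolynomial.eval_mul,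
      MvPolynomial.eval_X]
    congr 1
    apply Finset.sum_congr rfl
    intro i _
    ring
  have hevalQθ : ∀ c : Fin j → Fq,
      MvPolynomial.eval (fun i => algebraMap Fq C (c i)) Qθ = u c := by
    intro c
    rw [hu_eq c, hQθdef]
    simp only [map_add, MvPolynomial.eval_C, map_sum, MvPolynomial.eval_mul,
      MvPolynomial.eval_X]
    congr 1
    apply Finset.sum_congr rfl
    intro i _
    ring
  -- the RHS as a product of weights
  have hBw : (∏ i : Fin j, w i ^ (q - 1)) =
      (q:ℝ) ^ (-(((q - 1) * (j * (j + 1) / 2) : ℕ) : ℤ)) := by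
    have h1 : ∀ i : Fin j, w i ^ (q - 1) = (q:ℝ) ^ (((i:ℤ) - j) * ((q-1:ℕ):ℤ)) := by
      intro i
      rw [hwdef]
      simp only
      rw [← zpow_natCast ((q:ℝ) ^ ((i:ℤ) - j)) (q-1), ← zpow_mul]
    rw [Finset.prod_congr rfl fun i _ => h1 i, prod_zpow_sum _ hqne]
    congr 1
    rw [← Finset.sum_mul]
    have hD : ((j * (j + 1) / 2 : ℕ):ℤ) * 2 = (j:ℤ) * ((j:ℤ) + 1) := by
      have hdvd : 2 ∣ j * (j + 1) := (Nat.even_mul_succ_self j).two_dvd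
      have h := Nat.div_mul_cancel hdvd
      exact_mod_cast h
    have hg := gauss_aux j
    have hneg : (∑ i : Fin j, ((i:ℤ) - j)) = -∑ i : Fin j, ((j:ℤ) - i) := by
      rw [← Finset.sum_neg_distrib]
      exact Finset.sum_congr rfl fun i _ => by ring
    have hS : (∑ i : Fin j, ((i:ℤ) - j)) = -((j * (j + 1) / 2 : ℕ):ℤ) := by
      rw [hneg]
      have : (∑ i : Fin j, ((j:ℤ) - i)) = ((j * (j + 1) / 2 : ℕ):ℤ) := by linarith
      rw [this]
    rw [hS, Nat.cast_mul]
    ring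
  -- the main claim for all z, by density of ℕ in ℤ_p
  have hT : ∀ z : ℤ_[p],
      ‖∑ c : Fin j → Fq,
        (Polynomial.aeval t (monicOf Fq j c) / α ^ j) ^ β * upow (u c) z‖ ≤
        (q:ℝ) ^ (-(((q - 1) * (j * (j + 1) / 2) : ℕ) : ℤ)) := by
    have hTcont : Continuous (fun z : ℤ_[p] => ∑ c : Fin j → Fq,
        (Polynomial.aeval t (monicOf Fq j c) / α ^ j) ^ β * upow (u c) z) :=
      continuous_finset_sum _ fun c _ => continuous_const.mul (hupow_cont (u c) (hu c))
    have hclosed : IsClosed {z : ℤ_[p] | ‖∑ c : Fin j → Fq,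
        (Polynomial.aeval t (monicOf Fq j c) / α ^ j) ^ β * upow (u c) z‖ ≤
        (q:ℝ) ^ (-(((q - 1) * (j * (j + 1) / 2) : ℕ) : ℤ))} :=
      isClosed_le hTcont.norm continuous_const
    have hnat : ∀ n : ℕ, ‖∑ c : Fin j → Fq,
        (Polynomial.aeval t (monicOf Fq j c) / α ^ j) ^ β *
          upow (u c) ((n:ℕ) : ℤ_[p])‖ ≤
        (q:ℝ) ^ (-(((q - 1) * (j * (j + 1) / 2) : ℕ) : ℤ)) := by
      intro n
      have hupw : ∀ c : Fin j → Fq, upow (u c) ((n:ℕ) : ℤ_[p]) = u c ^ n := by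
        intro c
        have h1 : ((n:ℕ) : ℤ_[p]) = (((n:ℤ)) : ℤ_[p]) := by push_cast; ring
        rw [h1, hupow_int (u c) (hu c) (n:ℤ), zpow_natCast]
      have hrw : (∑ c : Fin j → Fq,
          (Polynomial.aeval t (monicOf Fq j c) / α ^ j) ^ β *
            upow (u c) ((n:ℕ) : ℤ_[p])) =
          ∑ c : Fin j → Fq,
            MvPolynomial.eval (fun i => algebraMap Fq C (c i)) (Pt ^ β * Qθ ^ n) := by
        apply Finset.sum_congr rfl
        intro c _
        rw [hupw c, map_mul, map_pow, map_pow, hevalPt c, hevalQθ c]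
      rw [hrw, ← hBw]
      exact key_bound hconst w hw0 hw1 _
        (wbnd_mul w hw0 (wbnd_pow w hw0 hwPt β) (wbnd_pow w hw0 hwQθ n))
    intro z
    have hsub : Set.range ((↑) : ℕ → ℤ_[p]) ⊆ {z : ℤ_[p] | ‖∑ c : Fin j → Fq,
        (Polynomial.aeval t (monicOf Fq j c) / α ^ j) ^ β * upow (u c) z‖ ≤
        (q:ℝ) ^ (-(((q - 1) * (j * (j + 1) / 2) : ℕ) : ℤ))} := by
      rintro _ ⟨n, rfl⟩
      exact hnat n
    exact hclosed.closure_subset_iff.mpr hsub (PadicInt.denseRange_natCast z)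
  exact hT (-y)
end

section
/- The infinite product ∏_{i=1}^∞ (1 − θ^{1−q^i})^{−1} converges in K = 𝔽_q((1/θ)); moreover, with π̃ := θ₁ θ ∏_{i=1}^∞ (1 − θ^{1−q^i})^{−1} and Ω(t) := θ₁^{−q} ∏_{i=1}^∞ (1 − t/θ^{q^i}), one has Ω(θ)·π̃ = −1. -/
open Filter

/-- Equations (1.2) and (1.4): the product `∏_{i=1}^∞ (1-θ^{1-q^i})^{-1}`
defining the Carlitz period `π̃ = θ₁ θ ∏_{i=1}^∞ (1-θ^{1-q^i})^{-1}` converges,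
the product `Ω(θ) = θ₁^{-q} ∏_{i=1}^∞ (1-θ/θ^{q^i})` converges, and
`Ω(θ)·π̃ = -1`.  `C` models `ℂ_∞` (containing `K = 𝔽_q((1/θ))`): a complete
nonarchimedean normed field with `‖θ‖ = q ≥ 2` and `θ₁^{q-1} = -θ`. -/
theorem pellarin_stmt14
    (q : ℕ) (hq : 2 ≤ q)
    (C : Type*) [NormedField C] [CompleteSpace C] [IsUltrametricDist C]
    (θ θ₁ : C) (hθ : ‖θ‖ = (q : ℝ)) (hθ₁ : θ₁ ^ (q - 1) = -θ) :
    ∃ P Om : C,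
      Tendsto (fun N : ℕ =>
          ∏ i ∈ Finset.Icc 1 N, (1 - θ ^ ((1 : ℤ) - (q : ℤ) ^ i))⁻¹)
        atTop (nhds P) ∧
      Tendsto (fun N : ℕ =>
          θ₁ ^ (-(q : ℤ)) * ∏ i ∈ Finset.Icc 1 N, (1 - θ / θ ^ (q ^ i)))
        atTop (nhds Om) ∧
      Om * (θ₁ * θ * P) = -1 := by
  have hq1 : (1:ℝ) < q := by exact_mod_cast (by omega : 1 < q)
  have hθne : θ ≠ 0 := by
    intro h
    rw [h, norm_zero] at hθ
    linarith
  have hθ₁ne : θ₁ ≠ 0 := by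
    intro h
    rw [h, zero_pow (by omega : q - 1 ≠ 0)] at hθ₁
    exact hθne (by rw [← neg_neg θ, ← hθ₁, neg_zero])
  -- the factors
  set x : ℕ → C := fun i => θ ^ ((1 : ℤ) - (q : ℤ) ^ i) with hx
  have hxnorm : ∀ i, ‖x i‖ = (q:ℝ) ^ ((1 : ℤ) - (q : ℤ) ^ i) := by
    intro i; rw [hx]; simp [norm_zpow, hθ]
  have hqpow : ∀ i : ℕ, 1 ≤ i → (2:ℤ) ≤ (q:ℤ) ^ i := by
    intro i hi
    exact le_trans (by exact_mod_cast hq)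
      (le_self_pow₀ (by exact_mod_cast (by omega : 1 ≤ q)) (by omega))
  have hxsmall : ∀ i, 1 ≤ i → ‖x i‖ < 1 := by
    intro i hi
    rw [hxnorm]
    have h2 : (1 : ℤ) - (q : ℤ) ^ i < 0 := by have := hqpow i hi; omega
    calc (q:ℝ) ^ ((1 : ℤ) - (q : ℤ) ^ i) < (q:ℝ) ^ (0:ℤ) :=
          zpow_lt_zpow_right₀ hq1 h2
      _ = 1 := by norm_num
  have honesub : ∀ i, 1 ≤ i → ‖1 - x i‖ = 1 := by
    intro i hi
    have hs := hxsmall i hi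
    have h1 := IsUltrametricDist.norm_add_le_max (1 : C) (-(x i))
    have h2 := IsUltrametricDist.norm_add_le_max (1 - x i) (x i)
    simp only [sub_add_cancel, norm_one, norm_neg, ← sub_eq_add_neg] at h1 h2
    have hle : ‖1 - x i‖ ≤ 1 := le_trans h1 (by rw [max_eq_left hs.le])
    have hge : 1 ≤ ‖1 - x i‖ := by
      rcases le_max_iff.mp h2 with h | h
      · exact h
      · linarith
    linarith
  -- partial products
  set f : ℕ → C := fun N => ∏ i ∈ Finset.Icc 1 N, (1 - x i) with hf
  have hfnorm : ∀ N, ‖f N‖ = 1 := by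
    intro N
    rw [hf, norm_prod]
    exact Finset.prod_eq_one fun i hi => honesub i (Finset.mem_Icc.mp hi).1
  have hsucc : ∀ n : ℕ, f (n + 1) = f n * (1 - x (n + 1)) := by
    intro n
    exact Finset.prod_Icc_succ_top (by omega) _
  have hdist : ∀ n : ℕ, dist (f n) (f (n + 1)) ≤ 1 * (1/2 : ℝ) ^ n := by
    intro n
    rw [dist_eq_norm, hsucc n]
    have he : f n - f n * (1 - x (n+1)) = f n * x (n+1) := by ring
    rw [he, norm_mul, hfnorm, one_mul, hxnorm, one_mul]
    have h1 : (q:ℝ) ^ ((1 : ℤ) - (q : ℤ) ^ (n+1)) ≤ (q:ℝ) ^ (-(n:ℤ)) := by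
      apply zpow_le_zpow_right₀ hq1.le
      have h2 : (n + 2 : ℤ) ≤ (q:ℤ) ^ (n+1) := by
        calc (n + 2 : ℤ) ≤ 2 ^ (n+1) := by
              exact_mod_cast Nat.succ_le_of_lt (Nat.lt_two_pow_self (n := n+1))
          _ ≤ (q:ℤ) ^ (n+1) := pow_le_pow_left₀ (by norm_num) (by exact_mod_cast hq) _
      omega
    have h3 : (q:ℝ) ^ (-(n:ℤ)) ≤ (1/2:ℝ) ^ n := by
      rw [zpow_neg, zpow_natCast, one_div, inv_pow]
      exact inv_anti₀ (by positivity) (pow_le_pow_left₀ (by norm_num) (by exact_mod_cast hq) n)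
    linarith
  have hcauchy : CauchySeq f := cauchySeq_of_le_geometric (1/2) 1 (by norm_num) hdist
  obtain ⟨A, hA⟩ := cauchySeq_tendsto_of_complete hcauchy
  have hAnorm : ‖A‖ = 1 := by
    refine tendsto_nhds_unique hA.norm ?_
    simp only [hfnorm]
    exact tendsto_const_nhds
  have hAne : A ≠ 0 := by
    intro h; rw [h, norm_zero] at hAnorm; linarith
  refine ⟨A⁻¹, θ₁ ^ (-(q : ℤ)) * A, ?_, ?_, ?_⟩
  · have : (fun N : ℕ => ∏ i ∈ Finset.Icc 1 N, (1 - θ ^ ((1 : ℤ) - (q : ℤ) ^ i))⁻¹)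
        = fun N => (f N)⁻¹ := by
      funext N
      rw [hf, ← Finset.prod_inv_distrib]
    rw [this]
    exact hA.inv₀ hAne
  · have hfactor : ∀ i : ℕ, 1 - θ / θ ^ (q ^ i) = 1 - x i := by
      intro i
      congr 1
      show θ / θ ^ q ^ i = θ ^ ((1 : ℤ) - (q : ℤ) ^ i)
      rw [zpow_sub₀ hθne, zpow_one]
      congr 1
      rw [← zpow_natCast θ (q ^ i)]
      congr 1
    have : (fun N : ℕ => θ₁ ^ (-(q : ℤ)) * ∏ i ∈ Finset.Icc 1 N, (1 - θ / θ ^ (q ^ i)))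
        = fun N => θ₁ ^ (-(q : ℤ)) * f N := by
      funext N
      congr 1
      exact Finset.prod_congr rfl fun i _ => hfactor i
    rw [this]
    exact tendsto_const_nhds.mul hA
  · have h1 : θ₁ ^ (-(q:ℤ)) * θ₁ = (-θ)⁻¹ := by
      have e1 : θ₁ ^ (-(q:ℤ)) * θ₁ = θ₁ ^ ((1:ℤ) - q) := by
        rw [zpow_sub₀ hθ₁ne, zpow_one, zpow_natCast]
        field_simp
        rw [zpow_neg, zpow_natCast, inv_mul_cancel₀ (pow_ne_zero _ hθ₁ne)]
      rw [e1, ← neg_sub (q:ℤ) 1, zpow_neg]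
      congr 1
      rw [← hθ₁, ← zpow_natCast θ₁ (q-1)]
      congr 1
      omega
    calc θ₁ ^ (-(q:ℤ)) * A * (θ₁ * θ * A⁻¹)
        = (θ₁ ^ (-(q:ℤ)) * θ₁) * θ * (A * A⁻¹) := by ring
      _ = (-θ)⁻¹ * θ * 1 := by rw [h1, mul_inv_cancel₀ hAne]
      _ = -1 := by rw [mul_one, inv_neg, neg_mul, inv_mul_cancel₀ hθne]
end

section
/- Let q be a prime power and e ≥ 1. If j is a nonnegative integer with (q−1)·e > j, then Σ_{a ∈ A₊(e)} a(θ)^j = 0 in 𝔽_q[θ], where A₊(e) is the set of monic polynomials of degree e over 𝔽_q. (This is the β = 0 case of the vanishing of special-polynomial coefficients, recovering the classical Carlitz–Lee vanishing.) -/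
/-- The classical Carlitz–Lee vanishing (the `β = 0` case of the vanishing of
special-polynomial coefficients): if `(q-1)·e > j` then
`∑_{a ∈ A₊(e)} a(θ)^j = 0` in `𝔽_q[θ]`. -/
theorem pellarin_stmt17
    (Fq : Type*) [Field Fq] [Fintype Fq]
    (e j : ℕ) (he : 1 ≤ e) (h : j < (Fintype.card Fq - 1) * e) :
    ∑ c : Fin e → Fq, (monicOf Fq e c) ^ j = (0 : Polynomial Fq) := by
  classical
  set q := Fintype.card Fq with hq
  -- rewrite monicOf as a sum over Option (Fin e)
  set g : (Fin e → Fq) → Option (Fin e) → Polynomial Fq :=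
    fun c i => i.elim (Polynomial.X ^ e)
      (fun n => Polynomial.C (c n) * Polynomial.X ^ (n : ℕ)) with hg
  have hmon : ∀ c : Fin e → Fq, monicOf Fq e c = ∑ i : Option (Fin e), g c i := by
    intro c
    rw [Fintype.sum_option]
    rfl
  simp_rw [hmon, Fintype.sum_pow]
  rw [Finset.sum_comm]
  apply Finset.sum_eq_zero
  intro p _
  -- fiber counts
  set k : Option (Fin e) → ℕ :=
    fun i => (Finset.univ.filter (fun t => p t = i)).card with hk
  have hfib : ∀ c : Fin e → Fq,
      (∏ t : Fin j, g c (p t)) = ∏ i : Option (Fin e), g c i ^ k i := by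
    intro c
    rw [← Finset.prod_fiberwise' Finset.univ p (g c)]
    exact Finset.prod_congr rfl fun i _ => (Finset.prod_const _)
  have key : (∑ c : Fin e → Fq, ∏ n : Fin e,
      (Polynomial.C (c n) * Polynomial.X ^ (n : ℕ)) ^ k (some n)) = 0 := by
    simp_rw [mul_pow, Finset.prod_mul_distrib, ← map_pow, ← map_prod,
      ← Finset.sum_mul, ← map_sum]
    have : (∑ c : Fin e → Fq, ∏ n : Fin e, c n ^ k (some n)) = 0 := by
      rw [← Fintype.piFinset_univ, ← Finset.prod_univ_sum (fun _ : Fin e => (Finset.univ : Finset Fq)) (fun n x => x ^ k (some n))]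
      have hsum : ∑ i : Option (Fin e), k i = j := by
        simpa [hk] using
          (Finset.card_eq_sum_card_fiberwise
            (f := p) (s := Finset.univ) (t := Finset.univ)
            (fun x _ => Finset.mem_univ _)).symm
      have hex : ∃ n : Fin e, k (some n) < q - 1 := by
        by_contra hc
        push_neg at hc
        have h1 : (q - 1) * e ≤ ∑ n : Fin e, k (some n) := by
          calc (q - 1) * e = ∑ _n : Fin e, (q - 1) := by
                simp [mul_comm]
            _ ≤ ∑ n : Fin e, k (some n) := Finset.sum_le_sum fun n _ => hc n
        have h2 : ∑ n : Fin e, k (some n) ≤ j := by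
          rw [← hsum, Fintype.sum_option]
          omega
        omega
      obtain ⟨n, hn⟩ := hex
      exact Finset.prod_eq_zero (Finset.mem_univ n)
        (FiniteField.sum_pow_lt_card_sub_one Fq _ hn)
    rw [this, map_zero, zero_mul]
  calc (∑ c : Fin e → Fq, ∏ t : Fin j, g c (p t))
      = ∑ c : Fin e → Fq, ∏ i : Option (Fin e), g c i ^ k i :=
        Finset.sum_congr rfl fun c _ => hfib c
    _ = ∑ c : Fin e → Fq, (Polynomial.X ^ e) ^ k none *
          ∏ n : Fin e, (Polynomial.C (c n) * Polynomial.X ^ (n : ℕ)) ^ k (some n) :=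
        Finset.sum_congr rfl fun c _ => Fintype.prod_option _
    _ = (Polynomial.X ^ e) ^ k none *
        ∑ c : Fin e → Fq, ∏ n : Fin e,
          (Polynomial.C (c n) * Polynomial.X ^ (n : ℕ)) ^ k (some n) := by
        rw [Finset.mul_sum]
    _ = 0 := by rw [key, mul_zero]
end
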